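/- arXiv:2302.07773 — 10 statements merged into one kernel-verified Lean document; each statement's English description precedes it below -/
import Mathlib

section
/- Explicit solution family for the variance-modulated moment problem: Let d ≥ 1, m₀ ∈ ℝ^d, α ∈ ℝ^d with α ≠ 0, β > 0 and t₀ ∈ ℝ. Define σ(t) := β / (|α| cosh(β t + t₀)) and m(t) := m₀ + (α/|α|²) β (tanh(β t + t₀) − tanh(t₀)) for t ∈ ℝ. Then for every t: (i) σ(t) > 0 and m'(t) = σ(t)² α; (ii) the Euler–Lagrange system holds, i.e. d/dt (m'(t)/σ(t)²) = 0 and σ''(t) σ(t) − σ'(t)² = −|m'(t)|²; and (iii) the action density is constant: (|m'(t)|² + σ'(t)²)/σ(t)² = β². -/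
/-!
The action is the energy of the hyperbolic metric `(|dm|² + dσ²) / σ²` on the half-space, and
the curve is a constant-speed geodesic (a half-circle). With `u = β t + t₀`, the profile
`σ = (β / ‖α‖) sech u` satisfies `σ' = -β tanh u · σ`, and `m' = σ² α` because
`tanh' = sech²`. Everything then reduces to `(σ ‖α‖)² = β² sech² u` together with
`tanh² u + sech² u = 1`.
-/

open Real

lemma Real.tanh_sq_add_one_div_cosh_sq (x : ℝ) : tanh x ^ 2 + 1 / cosh x ^ 2 = 1 := by
  have := cosh_sq_sub_sinh_sq x
  rw [tanh_eq_sinh_div_cosh]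
  field_simp
  linarith

lemma Real.hasDerivAt_tanh (x : ℝ) : HasDerivAt tanh (1 / cosh x ^ 2) x := by
  have h := (hasDerivAt_sinh x).div (hasDerivAt_cosh x) (cosh_pos x).ne'
  rwa [show sinh / cosh = tanh from funext fun y => (tanh_eq_sinh_div_cosh y).symm,
    ← sq, ← sq, cosh_sq_sub_sinh_sq] at h

lemma HasDerivAt.tanh {f : ℝ → ℝ} {f' x : ℝ} (hf : HasDerivAt f f' x) :
    HasDerivAt (fun y => Real.tanh (f y)) (f' / Real.cosh (f x) ^ 2) x :=
  ((hasDerivAt_tanh (f x)).comp x hf).congr_deriv (by ring)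

lemma HasDerivAt.const_div_cosh {f : ℝ → ℝ} {f' x : ℝ} (c : ℝ) (hf : HasDerivAt f f' x) :
    HasDerivAt (fun y => c / Real.cosh (f y))
      (-f' * Real.tanh (f x) * (c / Real.cosh (f x))) x := by
  have h := (hf.cosh.inv (cosh_pos (f x)).ne').const_mul c
  simp only [Pi.inv_apply, ← div_eq_mul_inv] at h
  refine h.congr_deriv ?_
  rw [tanh_eq_sinh_div_cosh]
  field_simp

lemma hasDerivAt_mul_add_const (a b x : ℝ) : HasDerivAt (fun y => a * y + b) a x := by
  simpa using ((hasDerivAt_id x).const_mul a).add_const b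

noncomputable def varianceCurve (a β t₀ t : ℝ) : ℝ := β / (a * cosh (β * t + t₀))

noncomputable def momentCurve {E : Type*} [NormedAddCommGroup E] [NormedSpace ℝ E]
    (m₀ α : E) (β t₀ t : ℝ) : E :=
  m₀ + (β * (tanh (β * t + t₀) - tanh t₀) / ‖α‖ ^ 2) • α

section VarianceCurve

variable (a β t₀ t : ℝ)

lemma varianceCurve_pos (ha : 0 < a) (hβ : 0 < β) : 0 < varianceCurve a β t₀ t := by
  unfold varianceCurve
  have := cosh_pos (β * t + t₀)
  positivity

lemma sq_varianceCurve_mul (ha : a ≠ 0) :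
    (varianceCurve a β t₀ t * a) ^ 2 = β ^ 2 / cosh (β * t + t₀) ^ 2 := by
  unfold varianceCurve
  have := (cosh_pos (β * t + t₀)).ne'
  field_simp

lemma hasDerivAt_varianceCurve :
    HasDerivAt (varianceCurve a β t₀)
      (-β * tanh (β * t + t₀) * varianceCurve a β t₀ t) t := by
  have h := (hasDerivAt_mul_add_const β t₀ t).const_div_cosh (β / a)
  simp only [← div_mul_eq_div_div] at h
  exact h

lemma hasDerivAt_deriv_varianceCurve :
    HasDerivAt (fun s => -β * tanh (β * s + t₀) * varianceCurve a β t₀ s)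
      (β ^ 2 * (tanh (β * t + t₀) ^ 2 - 1 / cosh (β * t + t₀) ^ 2) * varianceCurve a β t₀ t) t :=
  ((((hasDerivAt_mul_add_const β t₀ t).tanh).const_mul (-β)).mul
    (hasDerivAt_varianceCurve a β t₀ t)).congr_deriv (by ring)

end VarianceCurve

lemma hasDerivAt_momentCurve {E : Type*} [NormedAddCommGroup E] [NormedSpace ℝ E]
    (m₀ α : E) (β t₀ t : ℝ) :
    HasDerivAt (momentCurve m₀ α β t₀) (varianceCurve ‖α‖ β t₀ t ^ 2 • α) t := by
  have h := ((((hasDerivAt_mul_add_const β t₀ t).tanh.sub_const (tanh t₀)).const_mul β).div_const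
    (‖α‖ ^ 2)).smul_const α |>.const_add m₀
  refine h.congr_deriv ?_
  rw [varianceCurve]
  ring_nf

theorem stmt1_general (d : ℕ) (m₀ : EuclideanSpace ℝ (Fin d))
    (α : EuclideanSpace ℝ (Fin d)) (hα : α ≠ 0) (β t₀ : ℝ) (hβ : 0 < β)
    (m : ℝ → EuclideanSpace ℝ (Fin d)) (σ : ℝ → ℝ)
    (hσdef : ∀ t, σ t = β / (‖α‖ * Real.cosh (β * t + t₀)))
    (hmdef : ∀ t, m t = m₀ + ((β * (Real.tanh (β * t + t₀) - Real.tanh t₀)) / ‖α‖ ^ 2) • α) :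
    ∃ (m' : ℝ → EuclideanSpace ℝ (Fin d)) (σ' σ'' : ℝ → ℝ),
      (∀ t, HasDerivAt m (m' t) t) ∧
      (∀ t, HasDerivAt σ (σ' t) t) ∧
      (∀ t, HasDerivAt σ' (σ'' t) t) ∧
      (∀ t, 0 < σ t) ∧
      (∀ t, m' t = (σ t ^ 2) • α) ∧
      (∀ t, HasDerivAt (fun s => (σ s ^ 2)⁻¹ • m' s) (0 : EuclideanSpace ℝ (Fin d)) t) ∧
      (∀ t, σ'' t * σ t - (σ' t) ^ 2 = -‖m' t‖ ^ 2) ∧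
      (∀ t, (‖m' t‖ ^ 2 + (σ' t) ^ 2) / σ t ^ 2 = β ^ 2) := by
  obtain rfl : σ = varianceCurve ‖α‖ β t₀ := funext hσdef
  obtain rfl : m = momentCurve m₀ α β t₀ := funext hmdef
  set σ := varianceCurve ‖α‖ β t₀
  have hα' : 0 < ‖α‖ := norm_pos_iff.mpr hα
  have hσ (t : ℝ) : 0 < σ t := varianceCurve_pos ‖α‖ β t₀ t hα' hβ
  have hnorm (t : ℝ) : ‖σ t ^ 2 • α‖ = σ t ^ 2 * ‖α‖ := norm_smul_of_nonneg (sq_nonneg _) α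
  have hsq (t : ℝ) := sq_varianceCurve_mul ‖α‖ β t₀ t hα'.ne'
  refine ⟨_, _, _, hasDerivAt_momentCurve m₀ α β t₀, hasDerivAt_varianceCurve ‖α‖ β t₀,
    hasDerivAt_deriv_varianceCurve ‖α‖ β t₀, hσ, fun t => rfl, fun t => ?_, fun t => ?_,
    fun t => ?_⟩
  · exact (hasDerivAt_const t α).congr_of_eventuallyEq
      (.of_forall fun s => inv_smul_smul₀ (pow_pos (hσ s) 2).ne' α)
  · rw [hnorm]
    linear_combination σ t ^ 2 * hsq t
  · rw [hnorm, div_eq_iff (pow_pos (hσ t) 2).ne']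
    linear_combination σ t ^ 2 * hsq t + β ^ 2 * σ t ^ 2 * tanh_sq_add_one_div_cosh_sq (β * t + t₀)

/-- Explicit solution family for the variance-modulated moment problem. -/
theorem stmt1 (d : ℕ) (hd : 1 ≤ d) (m₀ : EuclideanSpace ℝ (Fin d))
    (α : EuclideanSpace ℝ (Fin d)) (hα : α ≠ 0) (β t₀ : ℝ) (hβ : 0 < β)
    (m : ℝ → EuclideanSpace ℝ (Fin d)) (σ : ℝ → ℝ)
    (hσdef : ∀ t, σ t = β / (‖α‖ * Real.cosh (β * t + t₀)))
    (hmdef : ∀ t, m t = m₀ + ((β * (Real.tanh (β * t + t₀) - Real.tanh t₀)) / ‖α‖ ^ 2) • α) :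
    ∃ (m' : ℝ → EuclideanSpace ℝ (Fin d)) (σ' σ'' : ℝ → ℝ),
      (∀ t, HasDerivAt m (m' t) t) ∧
      (∀ t, HasDerivAt σ (σ' t) t) ∧
      (∀ t, HasDerivAt σ' (σ'' t) t) ∧
      (∀ t, 0 < σ t) ∧
      (∀ t, m' t = (σ t ^ 2) • α) ∧
      (∀ t, HasDerivAt (fun s => (σ s ^ 2)⁻¹ • m' s) (0 : EuclideanSpace ℝ (Fin d)) t) ∧
      (∀ t, σ'' t * σ t - (σ' t) ^ 2 = -‖m' t‖ ^ 2) ∧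
      (∀ t, (‖m' t‖ ^ 2 + (σ' t) ^ 2) / σ t ^ 2 = β ^ 2) :=
  stmt1_general d m₀ α hα β t₀ hβ m σ hσdef hmdef
end

section
/- Small-mean-gap asymptotics of the moment distance: Fix σ₀, σ₁ > 0 with σ₀ ≠ σ₁ and define F(n) := ½ | log( (n² + σ₀² + σ₁² − √((n² + σ₀² + σ₁²)² − 4 σ₀² σ₁²)) / (2 σ₀ σ₁) ) |² for n ≥ 0. Then, as n → 0⁺, F(n) − ½ (log σ₀ − log σ₁)² − ( (log σ₀² − log σ₁²)/(σ₀² − σ₁²) ) · n²/2 = O(n⁴). -/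
/-!
Write `t = n²`. Then `F(n) = g(t)` with `g(t) = ½ (log λ(t))²` (`momentDistSq`), where `λ(t)` is the
smaller root of `σ₀σ₁ (λ + λ⁻¹) = t + σ₀² + σ₁²`. At `t = 0` the discriminant of this quadratic
is `(σ₀² - σ₁²)² > 0`, so `g` is smooth near `0`, and the claim is the first-order Taylor expansion
`g(t) = g(0) + g'(0) t + O(t²)`. Since `λ(0) = min(σ₀, σ₁) / max(σ₀, σ₁)`, one finds
`g(0) = ½ (log σ₀ - log σ₁)²` and `g'(0) = (log σ₀ - log σ₁) / (σ₀² - σ₁²)`.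
-/

open Real Asymptotics Filter Topology Set

section Taylor

variable {E : Type*} [NormedAddCommGroup E] [NormedSpace ℝ E]

theorem isBigO_sub_sq_of_hasDerivAt {f f' : ℝ → E} {x₀ : ℝ}
    (hf : ∀ᶠ x in 𝓝 x₀, HasDerivAt f (f' x) x) (hf' : f' =O[𝓝 x₀] (· - x₀)) :
    (f · - f x₀) =O[𝓝 x₀] fun x => (x - x₀) ^ 2 := by
  obtain ⟨C, hC_pos, hC⟩ := hf'.exists_pos
  obtain ⟨ε, hε, hball⟩ := Metric.eventually_nhds_iff_ball.1 (hf.and hC.bound)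
  refine IsBigO.of_bound C ?_
  filter_upwards [Metric.ball_mem_nhds x₀ hε] with x hx
  have hseg : uIcc x₀ x ⊆ Metric.ball x₀ ε :=
    (convex_ball x₀ ε).ordConnected.uIcc_subset (Metric.mem_ball_self hε) hx
  have hbound : ∀ y ∈ uIcc x₀ x, ‖f' y‖ ≤ C * ‖x - x₀‖ := fun y hy =>
    (hball y (hseg hy)).2.trans (by gcongr; exact abs_sub_left_of_mem_uIcc hy)
  calc ‖f x - f x₀‖ ≤ C * ‖x - x₀‖ * ‖x - x₀‖ :=
        (convex_uIcc x₀ x).norm_image_sub_le_of_norm_hasDerivWithin_le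
          (fun y hy => (hball y (hseg hy)).1.hasDerivWithinAt) hbound
          left_mem_uIcc right_mem_uIcc
    _ = C * ‖(x - x₀) ^ 2‖ := by rw [norm_pow]; ring

theorem ContDiffAt.isBigO_sub_sub_smul_deriv {f : ℝ → E} {x₀ : ℝ}
    (hf : ContDiffAt ℝ 2 f x₀) :
    (fun x => f x - f x₀ - (x - x₀) • deriv f x₀) =O[𝓝 x₀] fun x => (x - x₀) ^ 2 := by
  have hderiv : ∀ᶠ x in 𝓝 x₀, HasDerivAt f (deriv f x) x :=
    (hf.eventually (by simp)).mono fun x hx => (hx.differentiableAt (by simp)).hasDerivAt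
  have hderiv_lip : (deriv f · - deriv f x₀) =O[𝓝 x₀] (· - x₀) :=
    ((hf.derivWithin (m := 1) (by norm_num)).differentiableAt one_ne_zero).hasDerivAt.isBigO_sub
  have hremainder := isBigO_sub_sq_of_hasDerivAt
    (hderiv.mono fun x hx => hx.sub (((hasDerivAt_id x).sub_const x₀).smul_const (deriv f x₀)))
    (by simpa using hderiv_lip)
  simpa only [Pi.sub_apply, id, sub_self, zero_smul, sub_zero, sub_right_comm] using hremainder

end Taylor

/-- The smaller root `λ` of `a b (λ + λ⁻¹) = t + a² + b²`. -/
noncomputable def momentRoot (a b t : ℝ) : ℝ :=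
  (t + a ^ 2 + b ^ 2 - √((t + a ^ 2 + b ^ 2) ^ 2 - 4 * a ^ 2 * b ^ 2)) / (2 * a * b)

noncomputable def momentDistSq (a b t : ℝ) : ℝ :=
  (1 / 2) * log (momentRoot a b t) ^ 2

theorem momentRoot_comm (a b t : ℝ) : momentRoot a b t = momentRoot b a t := by
  unfold momentRoot; ring_nf

theorem momentDistSq_comm (a b : ℝ) : momentDistSq a b = momentDistSq b a := by
  funext t; simp only [momentDistSq, momentRoot_comm a b]

theorem momentRoot_pos {a b t : ℝ} (ha : 0 < a) (hb : 0 < b) (ht : 0 < t + a ^ 2 + b ^ 2) :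
    0 < momentRoot a b t := by
  have hab : 0 < a * b := mul_pos ha hb
  have hsqrt : √((t + a ^ 2 + b ^ 2) ^ 2 - 4 * a ^ 2 * b ^ 2) < t + a ^ 2 + b ^ 2 := by
    rw [sqrt_lt' ht]; nlinarith
  exact div_pos (by linarith) (by positivity)

theorem momentRoot_zero {a b : ℝ} (hb : 0 < b) (hba : b ≤ a) : momentRoot a b 0 = b / a := by
  have ha : 0 < a := hb.trans_le hba
  have hdisc : ((0 : ℝ) + a ^ 2 + b ^ 2) ^ 2 - 4 * a ^ 2 * b ^ 2 = (a ^ 2 - b ^ 2) ^ 2 := by ring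
  rw [momentRoot, hdisc, sqrt_sq (by nlinarith)]
  field_simp
  ring

theorem momentDistSq_zero {a b : ℝ} (ha : 0 < a) (hb : 0 < b) :
    momentDistSq a b 0 = (1 / 2) * (log a - log b) ^ 2 := by
  wlog hba : b ≤ a generalizing a b
  · rw [momentDistSq_comm, this hb ha (le_of_not_ge hba)]
    ring
  rw [momentDistSq, momentRoot_zero hb hba, log_div hb.ne' ha.ne']
  ring

theorem hasDerivAt_momentRoot_zero {a b : ℝ} (hb : 0 < b) (hba : b < a) :
    HasDerivAt (momentRoot a b) (-b / (a * (a ^ 2 - b ^ 2))) 0 := by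
  have ha : 0 < a := hb.trans hba
  have hgap : 0 < a ^ 2 - b ^ 2 := by nlinarith
  have hdisc : ((0 : ℝ) + a ^ 2 + b ^ 2) ^ 2 - 4 * a ^ 2 * b ^ 2 = (a ^ 2 - b ^ 2) ^ 2 := by ring
  have hsum : HasDerivAt (fun t : ℝ => t + a ^ 2 + b ^ 2) 1 0 :=
    ((hasDerivAt_id' 0).add_const _).add_const _
  have hsqrt := (hasDerivAt_sqrt (by rw [hdisc]; positivity)).comp 0
    ((hsum.fun_pow 2).sub_const (4 * a ^ 2 * b ^ 2))
  refine ((hsum.sub hsqrt).div_const (2 * a * b)).congr_deriv ?_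
  rw [hdisc, sqrt_sq hgap.le]
  field_simp
  ring

theorem hasDerivAt_momentDistSq_zero {a b : ℝ} (ha : 0 < a) (hb : 0 < b) (hab : a ≠ b) :
    HasDerivAt (momentDistSq a b) ((log a - log b) / (a ^ 2 - b ^ 2)) 0 := by
  wlog hba : b < a generalizing a b
  · have hab' : a < b := lt_of_le_of_ne (le_of_not_gt hba) hab
    convert momentDistSq_comm a b ▸ this hb ha hab.symm hab' using 1
    rw [← neg_sub (log a), ← neg_sub (a ^ 2), neg_div_neg_eq]
  have hroot := hasDerivAt_momentRoot_zero hb hba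
  have hpos : momentRoot a b 0 ≠ 0 := (momentRoot_pos ha hb (by positivity)).ne'
  refine ((((hasDerivAt_log hpos).comp 0 hroot).fun_pow 2).const_mul (1 / 2 : ℝ)).congr_deriv ?_
  have ha' : a ≠ 0 := ha.ne'
  have hb' : b ≠ 0 := hb.ne'
  have hgap : a ^ 2 - b ^ 2 ≠ 0 := by nlinarith
  simp only [Function.comp_apply, momentRoot_zero hb hba.le, log_div hb' ha']
  field_simp
  ring

theorem contDiffAt_momentDistSq_zero {n : WithTop ℕ∞} {a b : ℝ} (ha : 0 < a) (hb : 0 < b)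
    (hab : a ≠ b) : ContDiffAt ℝ n (momentDistSq a b) 0 := by
  have hdisc : ((0 : ℝ) + a ^ 2 + b ^ 2) ^ 2 - 4 * a ^ 2 * b ^ 2 ≠ 0 := by
    have hgap : a ^ 2 - b ^ 2 ≠ 0 :=
      sub_ne_zero.2 fun h => hab ((pow_left_inj₀ ha.le hb.le two_ne_zero).1 h)
    rw [show ((0 : ℝ) + a ^ 2 + b ^ 2) ^ 2 - 4 * a ^ 2 * b ^ 2 = (a ^ 2 - b ^ 2) ^ 2 by ring]
    positivity
  have hsqrt : ContDiffAt ℝ n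
      (fun t : ℝ => √((t + a ^ 2 + b ^ 2) ^ 2 - 4 * a ^ 2 * b ^ 2)) 0 :=
    (contDiffAt_sqrt hdisc).comp 0 (by fun_prop)
  have hroot : ContDiffAt ℝ n (momentRoot a b) 0 := by
    unfold momentRoot; fun_prop
  exact contDiffAt_const.mul
    ((hroot.log (momentRoot_pos ha hb (by positivity)).ne').pow 2)

/-- Small-mean-gap asymptotics of the variance-modulated moment distance. -/
theorem stmt4 (σ₀ σ₁ : ℝ) (h₀ : 0 < σ₀) (h₁ : 0 < σ₁) (hne : σ₀ ≠ σ₁) :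
    (fun n : ℝ =>
        (1 / 2) * |Real.log ((n ^ 2 + σ₀ ^ 2 + σ₁ ^ 2 -
            Real.sqrt ((n ^ 2 + σ₀ ^ 2 + σ₁ ^ 2) ^ 2 - 4 * σ₀ ^ 2 * σ₁ ^ 2)) /
          (2 * σ₀ * σ₁))| ^ 2
        - (1 / 2) * (Real.log σ₀ - Real.log σ₁) ^ 2
        - ((Real.log (σ₀ ^ 2) - Real.log (σ₁ ^ 2)) / (σ₀ ^ 2 - σ₁ ^ 2)) * n ^ 2 / 2)
      =O[nhdsWithin 0 (Set.Ioi 0)] (fun n : ℝ => n ^ 4) := by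
  have hTaylor := (contDiffAt_momentDistSq_zero (n := 2) h₀ h₁ hne).isBigO_sub_sub_smul_deriv
  rw [(hasDerivAt_momentDistSq_zero h₀ h₁ hne).deriv, momentDistSq_zero h₀ h₁] at hTaylor
  have hsq : Tendsto (fun n : ℝ => n ^ 2) (𝓝[>] 0) (𝓝 0) := by
    simpa using ((continuous_pow 2).tendsto (0 : ℝ)).mono_left nhdsWithin_le_nhds
  refine (hTaylor.comp_tendsto hsq).congr (fun n => ?_) (fun n => ?_)
  · simp only [Function.comp_apply, momentDistSq, momentRoot, sq_abs, log_pow, smul_eq_mul]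
    push_cast
    ring
  · simp only [Function.comp_apply]
    ring
end

section
/- Exponential decay of the normalized mean along the moment flow: Let d ≥ 1, x₀ ∈ ℝ^d and B a symmetric positive definite d×d real matrix. Suppose m : [0,∞) → ℝ^d and C, A : [0,∞) → d×d real matrices are differentiable with m'(t) = −C(t) B⁻¹ (m(t) − x₀), C'(t) = 2 C(t) − 2 C(t) B⁻¹ C(t), A'(t) = ½ C'(t) (A(t)ᵀ)⁻¹, that A(t) is invertible and A(t) A(t)ᵀ = C(t) for every t ≥ 0. Then for every t ≥ 0: A(t)⁻¹ (m(t) − x₀) = e^{−t} · A(0)⁻¹ (m(0) − x₀). -/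
open Matrix

attribute [local instance] Matrix.normedAddCommGroup Matrix.normedSpace

/-! Since `A Aᵀ = C`, the equation for `A` reads `A' = (1 - C B⁻¹) A`. Hence
`w = A⁻¹ (m - x₀)` satisfies `w' = -A⁻¹ A' A⁻¹ (m - x₀) + A⁻¹ m' = -w`, so `eᵗ w(t)` is
constant on `[0, ∞)`. -/

theorem MulEquiv.map_ringInverse {α β : Type*} [MonoidWithZero α] [MonoidWithZero β]
    (f : α ≃* β) (x : α) : f (Ring.inverse x) = Ring.inverse (f x) := by
  by_cases hx : IsUnit x
  · obtain ⟨u, rfl⟩ := hx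
    have := Ring.inverse_unit (Units.map (f : α →* β) u)
    simp only [← map_inv, Units.coe_map] at this
    simpa [Ring.inverse_unit] using this.symm
  · rw [Ring.inverse_non_unit x hx,
      Ring.inverse_non_unit _ (fun h => hx (by simpa using h.map f.symm))]
    exact map_zero f

namespace Matrix

variable {n : Type*} [Fintype n] [DecidableEq n]

/- The entrywise sup norm on matrices is not submultiplicative, so matrix-valued curves are
differentiated by transport to this Banach algebra. -/
noncomputable def toContinuousLinearMapAlgEquiv :
    Matrix n n ℝ ≃ₐ[ℝ] ((n → ℝ) →L[ℝ] (n → ℝ)) :=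
  Matrix.toLinAlgEquiv'.trans (Module.End.toContinuousLinearMap (n → ℝ))

theorem _root_.HasDerivAt.matrix_mulVec {M : ℝ → Matrix n n ℝ} {v : ℝ → n → ℝ}
    {M' : Matrix n n ℝ} {v' : n → ℝ} {t : ℝ} (hM : HasDerivAt M M' t) (hv : HasDerivAt v v' t) :
    HasDerivAt (fun s => M s *ᵥ v s) (M' *ᵥ v t + M t *ᵥ v') t :=
  let e := (toContinuousLinearMapAlgEquiv (n := n)).toLinearEquiv.toContinuousLinearEquiv
  (e.hasFDerivAt.comp_hasDerivAt t hM).clm_apply hv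

theorem _root_.HasDerivAt.matrix_inv {M : ℝ → Matrix n n ℝ} {M' : Matrix n n ℝ} {t : ℝ}
    (hM : HasDerivAt M M' t) (ht : IsUnit (M t)) :
    HasDerivAt (fun s => (M s)⁻¹) (-((M t)⁻¹ * M' * (M t)⁻¹)) t := by
  let Φ := (toContinuousLinearMapAlgEquiv (n := n))
  let e := Φ.toLinearEquiv.toContinuousLinearEquiv
  have hΦinv : ∀ N : Matrix n n ℝ, Φ N⁻¹ = Ring.inverse (Φ N) := fun N => by
    rw [nonsing_inv_eq_ringInverse]
    exact Φ.toMulEquiv.map_ringInverse N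
  have hfun : (fun s => (M s)⁻¹) = e.symm ∘ Ring.inverse ∘ e ∘ M := by
    funext s
    exact e.eq_symm_apply.mpr (hΦinv (M s))
  have hinverse := (hasFDerivAt_ringInverse (𝕜 := ℝ) (ht.map Φ).unit).comp_hasDerivAt t
    (e.hasFDerivAt.comp_hasDerivAt t hM)
  rw [hfun]
  refine (e.symm.hasFDerivAt.comp_hasDerivAt t hinverse).congr_deriv ?_
  change e.symm _ = _
  rw [e.symm_apply_eq]
  simp [e, ← Ring.inverse_unit, hΦinv]
  rfl

theorem half_smul_riccati_mul_transpose_inv {A C K : Matrix n n ℝ} (hAC : A * Aᵀ = C)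
    (hA : IsUnit A) : (1 / 2 : ℝ) • ((2 * C - 2 * (C * K * C)) * (Aᵀ)⁻¹) = A - C * K * A := by
  have hCA : C * (Aᵀ)⁻¹ = A := by
    rw [← hAC, mul_nonsing_inv_cancel_right _ _
      (isUnit_det_transpose _ ((isUnit_iff_isUnit_det A).mp hA))]
  have hrhs : (2 * C - 2 * (C * K * C)) * (Aᵀ)⁻¹ = 2 * (A - C * K * A) := by
    rw [← mul_sub, mul_assoc, sub_mul, hCA, mul_assoc (C * K), hCA]
  rw [hrhs, two_mul, ← two_smul ℝ, smul_smul]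
  norm_num

theorem hasDerivAt_inv_mulVec_eq_neg {A : ℝ → Matrix n n ℝ} {u : ℝ → n → ℝ}
    {K : Matrix n n ℝ} {t : ℝ} (hA : HasDerivAt A (A t - K * A t) t)
    (hu : HasDerivAt u (-(K *ᵥ u t)) t) (ht : IsUnit (A t)) :
    HasDerivAt (fun s => (A s)⁻¹ *ᵥ u s) (-((A t)⁻¹ *ᵥ u t)) t := by
  refine ((hA.matrix_inv ht).matrix_mulVec hu).congr_deriv ?_
  have hdet : IsUnit (A t).det := (isUnit_iff_isUnit_det _).mp ht
  have hconj : (A t)⁻¹ * (A t - K * A t) * (A t)⁻¹ = (A t)⁻¹ - (A t)⁻¹ * K := by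
    rw [mul_sub, sub_mul, nonsing_inv_mul _ hdet, one_mul, mul_assoc, mul_assoc,
      mul_nonsing_inv _ hdet, mul_one]
  rw [hconj, neg_mulVec, sub_mulVec, mulVec_neg, ← mulVec_mulVec]
  abel

end Matrix

theorem eq_exp_neg_smul_of_hasDerivAt_neg {E : Type*} [NormedAddCommGroup E] [NormedSpace ℝ E]
    {w : ℝ → E} (hw : ∀ s, 0 ≤ s → HasDerivAt w (-w s) s) {t : ℝ} (ht : 0 ≤ t) :
    w t = Real.exp (-t) • w 0 := by
  have hconst : ∀ s ∈ Set.Icc 0 t, Real.exp s • w s = Real.exp 0 • w 0 := by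
    refine constant_of_has_deriv_right_zero (fun s hs => ?_) (fun s hs => ?_)
    · exact ((Real.hasDerivAt_exp s).smul (hw s hs.1)).continuousAt.continuousWithinAt
    · exact (((Real.hasDerivAt_exp s).smul (hw s hs.1)).congr_deriv (by simp)).hasDerivWithinAt
  calc w t = Real.exp (-t) • (Real.exp t • w t) := by
        rw [smul_smul, ← Real.exp_add, neg_add_cancel, Real.exp_zero, one_smul]
    _ = Real.exp (-t) • w 0 := by rw [hconst t ⟨ht, le_rfl⟩, Real.exp_zero, one_smul]

theorem stmt5_general (d : ℕ) (x₀ : Fin d → ℝ)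
    (B : Matrix (Fin d) (Fin d) ℝ)
    (m : ℝ → (Fin d → ℝ)) (C A : ℝ → Matrix (Fin d) (Fin d) ℝ)
    (hm : ∀ t, 0 ≤ t → HasDerivAt m (-((C t * B⁻¹) *ᵥ (m t - x₀))) t)
    (hA : ∀ t, 0 ≤ t →
      HasDerivAt A ((1 / 2 : ℝ) • ((2 * C t - 2 * (C t * B⁻¹ * C t)) * ((A t)ᵀ)⁻¹)) t)
    (hAunit : ∀ t, 0 ≤ t → IsUnit (A t))
    (hAAt : ∀ t, 0 ≤ t → A t * (A t)ᵀ = C t) :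
    ∀ t, 0 ≤ t →
      (A t)⁻¹ *ᵥ (m t - x₀) = Real.exp (-t) • ((A 0)⁻¹ *ᵥ (m 0 - x₀)) := by
  have hA' : ∀ s, 0 ≤ s → HasDerivAt A (A s - C s * B⁻¹ * A s) s := fun s hs => by
    simpa only [half_smul_riccati_mul_transpose_inv (hAAt s hs) (hAunit s hs)] using hA s hs
  intro t ht
  exact eq_exp_neg_smul_of_hasDerivAt_neg (fun s hs =>
    hasDerivAt_inv_mulVec_eq_neg (hA' s hs) ((hm s hs).sub_const x₀) (hAunit s hs)) ht

/-- Exponential decay of the normalized mean along the moment flow of the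
covariance-modulated Fokker-Planck equation with Gaussian target `N(x₀, B)`. -/
theorem stmt5 (d : ℕ) (hd : 1 ≤ d) (x₀ : Fin d → ℝ)
    (B : Matrix (Fin d) (Fin d) ℝ) (hB : B.PosDef)
    (m : ℝ → (Fin d → ℝ)) (C A : ℝ → Matrix (Fin d) (Fin d) ℝ)
    (hm : ∀ t, 0 ≤ t → HasDerivAt m (-((C t * B⁻¹) *ᵥ (m t - x₀))) t)
    (hC : ∀ t, 0 ≤ t → HasDerivAt C (2 * C t - 2 * (C t * B⁻¹ * C t)) t)
    (hA : ∀ t, 0 ≤ t →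
      HasDerivAt A ((1 / 2 : ℝ) • ((2 * C t - 2 * (C t * B⁻¹ * C t)) * ((A t)ᵀ)⁻¹)) t)
    (hAunit : ∀ t, 0 ≤ t → IsUnit (A t))
    (hAAt : ∀ t, 0 ≤ t → A t * (A t)ᵀ = C t) :
    ∀ t, 0 ≤ t →
      (A t)⁻¹ *ᵥ (m t - x₀) = Real.exp (-t) • ((A 0)⁻¹ *ᵥ (m 0 - x₀)) :=
  stmt5_general d x₀ B m C A hm hA hAunit hAAt
end

section
/- Explicit solution of the covariance Riccati flow: Let d ≥ 1 and B a symmetric positive definite d×d real matrix. Suppose C : [0,∞) → d×d real matrices is differentiable with C'(t) = 2 C(t) − 2 C(t) B⁻¹ C(t) and C(t) invertible for every t ≥ 0. Then for every t ≥ 0: C(t)⁻¹ = (1 − e^{−2t}) B⁻¹ + e^{−2t} C(0)⁻¹. -/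
/-!
Since `HasDerivAt` depends only on the topology, the derivative of `s ↦ (C s)⁻¹` may be computed
in the normed ring structure of matrices, giving `-C⁻¹ C' C⁻¹`. Along the Riccati flow `C⁻¹` therefore solves
the linear equation `(C⁻¹)' = 2 (B⁻¹ - C⁻¹)`, so `e^{2t} (C(t)⁻¹ - B⁻¹)` is constant.
-/

open Matrix

attribute [local instance] Matrix.normedAddCommGroup Matrix.normedSpace

theorem eq_of_hasDerivAt_eq_smul_sub {E : Type*} [NormedAddCommGroup E] [NormedSpace ℝ E]
    {g : ℝ → E} {a : E} {k : ℝ} (hg : ∀ t, 0 ≤ t → HasDerivAt g (k • (a - g t)) t) :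
    ∀ t, 0 ≤ t → g t = (1 - Real.exp (-k * t)) • a + Real.exp (-k * t) • g 0 := by
  set F : ℝ → E := fun s => Real.exp (k * s) • (g s - a)
  have hF : ∀ s, 0 ≤ s → HasDerivAt F 0 s := fun s hs => by
    convert ((hasDerivAt_id s).const_mul k).exp.smul ((hg s hs).sub_const a) using 1
    · rfl
    · simp only [id, mul_one]
      module
  intro t ht
  have hconst : F t = F 0 :=
    constant_of_has_deriv_right_zero
      (fun x hx => (hF x hx.1).continuousAt.continuousWithinAt)
      (fun x hx => (hF x hx.1).hasDerivWithinAt) t ⟨ht, le_rfl⟩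
  have key : g t - a = Real.exp (-k * t) • (g 0 - a) := by
    simpa [F, smul_smul, ← Real.exp_add] using congrArg (Real.exp (-k * t) • ·) hconst
  linear_combination (norm := module) key

section LinftyOp

attribute [local instance] Matrix.linftyOpNormedRing Matrix.linftyOpNormedAlgebra

variable {𝕜 n : Type*} [NontriviallyNormedField 𝕜] [CompleteSpace 𝕜] [Fintype n] [DecidableEq n]

theorem HasDerivAt.matrix_inv_s6 {C : 𝕜 → Matrix n n 𝕜} {C' : Matrix n n 𝕜} {t : 𝕜}
    (hC : HasDerivAt C C' t) (hCt : IsUnit (C t)) :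
    HasDerivAt (fun s => (C s)⁻¹) (-((C t)⁻¹ * C' * (C t)⁻¹)) t := by
  -- instance search does not see that the product uniformity is the operator-norm one
  have : HasSummableGeomSeries (Matrix n n 𝕜) :=
    @instHasSummableGeomSeriesOfCompleteSpace _ _ (inferInstanceAs (CompleteSpace (n → n → 𝕜)))
  obtain ⟨u, hu⟩ := hCt
  have hinv := hasFDerivAt_ringInverse (𝕜 := 𝕜) u
  rw [hu] at hinv
  simp_rw [nonsing_inv_eq_ringInverse, ← hu, Ring.inverse_unit]
  exact hinv.comp_hasDerivAt t hC

theorem HasDerivAt.matrix_inv_of_riccati {C : 𝕜 → Matrix n n 𝕜} {A : Matrix n n 𝕜} {t : 𝕜}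
    (hC : HasDerivAt C (2 * C t - 2 * (C t * A * C t)) t) (hCt : IsUnit (C t)) :
    HasDerivAt (fun s => (C s)⁻¹) ((2 : 𝕜) • (A - (C t)⁻¹)) t := by
  have hdet := (isUnit_iff_isUnit_det _).1 hCt
  convert hC.matrix_inv_s6 hCt using 1
  calc (2 : 𝕜) • (A - (C t)⁻¹)
      = 2 * ((C t)⁻¹ * C t) * A * (C t * (C t)⁻¹) - 2 * (C t)⁻¹ * (C t * (C t)⁻¹) := by
        rw [nonsing_inv_mul _ hdet, mul_nonsing_inv _ hdet, two_smul]
        noncomm_ring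
    _ = -((C t)⁻¹ * (2 * C t - 2 * (C t * A * C t)) * (C t)⁻¹) := by noncomm_ring

end LinftyOp

theorem stmt6_general (d : ℕ)
    (B : Matrix (Fin d) (Fin d) ℝ)
    (C : ℝ → Matrix (Fin d) (Fin d) ℝ)
    (hC : ∀ t, 0 ≤ t → HasDerivAt C (2 * C t - 2 * (C t * B⁻¹ * C t)) t)
    (hCunit : ∀ t, 0 ≤ t → IsUnit (C t)) :
    ∀ t, 0 ≤ t →
      (C t)⁻¹ = (1 - Real.exp (-2 * t)) • B⁻¹ + Real.exp (-2 * t) • (C 0)⁻¹ :=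
  eq_of_hasDerivAt_eq_smul_sub fun t ht =>
    (hC t ht).matrix_inv_of_riccati (hCunit t ht)

/-- Explicit solution of the covariance Riccati flow
`C'(t) = 2 C(t) - 2 C(t) B⁻¹ C(t)`. -/
theorem stmt6 (d : ℕ) (hd : 1 ≤ d)
    (B : Matrix (Fin d) (Fin d) ℝ) (hB : B.PosDef)
    (C : ℝ → Matrix (Fin d) (Fin d) ℝ)
    (hC : ∀ t, 0 ≤ t → HasDerivAt C (2 * C t - 2 * (C t * B⁻¹ * C t)) t)
    (hCunit : ∀ t, 0 ≤ t → IsUnit (C t)) :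
    ∀ t, 0 ≤ t →
      (C t)⁻¹ = (1 - Real.exp (-2 * t)) • B⁻¹ + Real.exp (-2 * t) • (C 0)⁻¹ :=
  stmt6_general d B C hC hCunit
end

section
/- Uniform spectral bound along the covariance Riccati flow: Let d ≥ 1 and B a symmetric positive definite d×d real matrix. Suppose C : [0,∞) → d×d real matrices is differentiable with C'(t) = 2 C(t) − 2 C(t) B⁻¹ C(t) and C(t) symmetric positive definite for every t ≥ 0. Then for every t ≥ 0: ‖C(t)‖₂ ≤ ‖B‖₂ · max{ 1, ‖B^{−1/2} C(0) B^{−1/2}‖₂ }, where B^{−1/2} is the inverse of the positive definite square root of B. -/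
open Matrix

attribute [local instance] Matrix.normedAddCommGroup Matrix.normedSpace

open scoped ComplexOrder in
/-- The positive semidefinite square root of a positive semidefinite matrix
(the definition `Matrix.PosSemidef.sqrt` of the older Mathlib, since removed). -/
noncomputable def Matrix.PosSemidef.sqrt {n 𝕜 : Type*} [Fintype n] [RCLike 𝕜] [DecidableEq n]
    {A : Matrix n n 𝕜} (hA : A.PosSemidef) : Matrix n n 𝕜 :=
  hA.1.eigenvectorUnitary.1 * diagonal ((↑) ∘ (√·) ∘ hA.1.eigenvalues) *
  (star hA.1.eigenvectorUnitary : Matrix n n 𝕜)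

/-- The spectral norm (`ℓ² → ℓ²` operator norm) of a real square matrix. -/
noncomputable def matSpectralNorm {d : ℕ} (M : Matrix (Fin d) (Fin d) ℝ) : ℝ :=
  ‖LinearMap.toContinuousLinearMap (Matrix.toEuclideanLin M)‖

/-!
Conjugating by `P = B^{-1/2}` turns the flow into the normalised Riccati flow `A' = 2A - 2A²`,
`A = P C P`, which stays positive. For a vector `v`, `φ = ⟪A v, v⟫` satisfies
`φ' = 2φ - 2‖A v‖² ≤ 2φ (1 - φ / ‖v‖²)` by Cauchy–Schwarz, so `φ` can never climb above
`max 1 ‖A 0‖ * ‖v‖²`; for a positive operator this bounds `‖A t‖`, and finally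
`‖C t‖ = ‖P⁻¹ A P⁻¹‖ ≤ ‖P⁻¹‖² ‖A t‖ = ‖B‖ ‖A t‖`.
-/

open scoped RealInnerProductSpace

namespace Matrix.PosSemidef

open scoped ComplexOrder

variable {n 𝕜 : Type*} [Fintype n] [RCLike 𝕜] [DecidableEq n] {A : Matrix n n 𝕜}

lemma posSemidef_sqrt (hA : A.PosSemidef) : hA.sqrt.PosSemidef := by
  unfold Matrix.PosSemidef.sqrt
  simpa [star_eq_conjTranspose] using
    (PosSemidef.diagonal fun i => by simp [Real.sqrt_nonneg]).mul_mul_conjTranspose_same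
      (hA.1.eigenvectorUnitary : Matrix n n 𝕜)

lemma sqrt_mul_self (hA : A.PosSemidef) : hA.sqrt * hA.sqrt = A := by
  unfold Matrix.PosSemidef.sqrt
  calc _ = hA.1.eigenvectorUnitary.1 *
        (diagonal ((↑) ∘ (√·) ∘ hA.1.eigenvalues) *
          ((star hA.1.eigenvectorUnitary : Matrix n n 𝕜) * hA.1.eigenvectorUnitary.1) *
          diagonal ((↑) ∘ (√·) ∘ hA.1.eigenvalues)) *
        (star hA.1.eigenvectorUnitary : Matrix n n 𝕜) := by simp only [Matrix.mul_assoc]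
  _ = hA.1.eigenvectorUnitary.1 * diagonal (RCLike.ofReal ∘ hA.1.eigenvalues) *
        (star hA.1.eigenvectorUnitary : Matrix n n 𝕜) := by
      rw [Unitary.coe_star_mul_self, Matrix.mul_one, diagonal_mul_diagonal]
      congr 3
      funext i
      simp [← RCLike.ofReal_mul, Real.mul_self_sqrt (hA.eigenvalues_nonneg i)]
  _ = A := by conv_rhs => rw [hA.1.spectral_theorem, Unitary.conjStarAlgAut_apply]

lemma _root_.Matrix.PosDef.isUnit_det_sqrt (hA : A.PosDef) : IsUnit hA.posSemidef.sqrt.det :=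
  (isUnit_iff_isUnit_det _).mp <|
    isUnit_of_mul_isUnit_left (hA.posSemidef.sqrt_mul_self ▸ hA.isUnit)

end Matrix.PosSemidef

theorem ContinuousLinearMap.IsPositive.norm_le_of_re_inner_le {𝕜 E : Type*} [RCLike 𝕜]
    [NormedAddCommGroup E] [InnerProductSpace 𝕜 E] {T : E →L[𝕜] E} (hT : T.IsPositive) {K : ℝ}
    (hK : 0 ≤ K) (h : ∀ x, RCLike.re (inner 𝕜 (T x) x) ≤ K * ‖x‖ ^ 2) : ‖T‖ ≤ K := by
  rw [T.norm_eq_iSup_rayleighQuotient hT.isSymmetric]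
  refine ciSup_le fun x => ?_
  rcases eq_or_ne x 0 with rfl | hx
  · simpa using hK
  have hx2 : 0 < ‖x‖ ^ 2 := by positivity
  rw [rayleighQuotient, reApplyInnerSelf_apply,
    abs_of_nonneg (div_nonneg (hT.re_inner_nonneg_left x) hx2.le), div_le_iff₀ hx2]
  exact h x

theorem le_of_hasDerivAt_neg_above {φ φ' : ℝ → ℝ} {M K : ℝ} (hMK : M ≤ K)
    (hφ : ∀ s, 0 ≤ s → HasDerivAt φ (φ' s) s) (hφ' : ∀ s, 0 ≤ s → M < φ s → φ' s < 0)
    (h0 : φ 0 ≤ K) {t : ℝ} (ht : 0 ≤ t) : φ t ≤ K := by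
  refine le_of_forall_pos_le_add fun ε hε => ?_
  refine image_le_of_deriv_right_lt_deriv_boundary (B := fun _ => K + ε)
    (fun s hs => (hφ s hs.1).continuousAt.continuousWithinAt)
    (fun s hs => (hφ s hs.1).hasDerivWithinAt) (by linarith) (fun _ => hasDerivAt_const _ _)
    (fun s hs hsK => hφ' s hs.1 (by linarith)) ⟨ht, le_rfl⟩

section Riccati

variable {E : Type*} [NormedAddCommGroup E] [InnerProductSpace ℝ E] {A : ℝ → E →L[ℝ] E}

theorem hasDerivAt_inner_apply_of_riccati {t : ℝ}
    (hA : HasDerivAt A (2 * A t - 2 * (A t * A t)) t) (hAt : (A t : E →ₗ[ℝ] E).IsSymmetric)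
    (v : E) :
    HasDerivAt (fun s => ⟪A s v, v⟫) (2 * ⟪A t v, v⟫ - 2 * ‖A t v‖ ^ 2) t := by
  refine ((hA.clm_apply (hasDerivAt_const t v)).inner ℝ (hasDerivAt_const t v)).congr_deriv ?_
  have hAAv : ⟪A t (A t v), v⟫ = ‖A t v‖ ^ 2 := by
    rw [← real_inner_self_eq_norm_sq]
    exact hAt (A t v) v
  simp only [inner_zero_right, _root_.sub_apply, mul_apply_eq_comp,
    ContinuousLinearMap.ofNat_apply, two_smul, map_zero, add_zero, inner_sub_left,
    inner_add_left, hAAv, zero_add]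
  ring

theorem norm_le_max_one_of_riccati
    (hA : ∀ s, 0 ≤ s → HasDerivAt A (2 * A s - 2 * (A s * A s)) s)
    (hpos : ∀ s, 0 ≤ s → (A s).IsPositive) {t : ℝ} (ht : 0 ≤ t) : ‖A t‖ ≤ max 1 ‖A 0‖ := by
  set K := max 1 ‖A 0‖
  refine (hpos t ht).norm_le_of_re_inner_le (zero_le_one.trans (le_max_left _ _)) fun v => ?_
  refine le_of_hasDerivAt_neg_above (M := ‖v‖ ^ 2)
    (le_mul_of_one_le_left (sq_nonneg _) (le_max_left _ _))
    (fun s hs => hasDerivAt_inner_apply_of_riccati (hA s hs) (hpos s hs).isSymmetric v) ?_ ?_ ht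
  · intro s hs hlt
    have := real_inner_le_norm (A s v) v
    nlinarith [norm_nonneg v, norm_nonneg (A s v)]
  · calc ⟪A 0 v, v⟫ ≤ ‖A 0 v‖ * ‖v‖ := real_inner_le_norm _ _
      _ ≤ ‖A 0‖ * ‖v‖ * ‖v‖ := by gcongr; exact (A 0).le_opNorm v
      _ ≤ K * ‖v‖ ^ 2 := by rw [mul_assoc, ← sq]; gcongr; exact le_max_right _ _

end Riccati

section MatrixDeriv

variable {n : Type*} [Fintype n] {C : ℝ → Matrix n n ℝ} {C' : Matrix n n ℝ} {t : ℝ}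

theorem HasDerivAt.mul_mul_const (hC : HasDerivAt C C' t) (P Q : Matrix n n ℝ) :
    HasDerivAt (fun s => P * C s * Q) (P * C' * Q) t :=
  (LinearMap.mulRight ℝ Q ∘ₗ LinearMap.mulLeft ℝ P).toContinuousLinearMap.hasFDerivAt
    |>.comp_hasDerivAt t hC

theorem HasDerivAt.toEuclideanCLM [DecidableEq n] (hC : HasDerivAt C C' t) :
    HasDerivAt (fun s => Matrix.toEuclideanCLM (𝕜 := ℝ) (C s))
      (Matrix.toEuclideanCLM (𝕜 := ℝ) C') t :=
  (Matrix.toEuclideanCLM (𝕜 := ℝ) (n := n)).toAlgEquiv.toLinearMap.toContinuousLinearMap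
    |>.hasFDerivAt.comp_hasDerivAt t hC

theorem HasDerivAt.conj_of_riccati [DecidableEq n] {B P : Matrix n n ℝ} (hP : P * P = B⁻¹)
    (hC : HasDerivAt C (2 * C t - 2 * (C t * B⁻¹ * C t)) t) :
    HasDerivAt (fun s => P * C s * P)
      (2 * (P * C t * P) - 2 * (P * C t * P * (P * C t * P))) t :=
  (hC.mul_mul_const P P).congr_deriv <| by
    rw [← hP]
    noncomm_ring

end MatrixDeriv

theorem matSpectralNorm_le_mul_conj_sqrt {d : ℕ} {B : Matrix (Fin d) (Fin d) ℝ} (hB : B.PosDef)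
    (X : Matrix (Fin d) (Fin d) ℝ) :
    matSpectralNorm X ≤ matSpectralNorm B *
      matSpectralNorm (hB.posSemidef.sqrt⁻¹ * X * hB.posSemidef.sqrt⁻¹) := by
  let T := Matrix.toEuclideanCLM (𝕜 := ℝ) (n := Fin d)
  set S := hB.posSemidef.sqrt
  have hS := hB.isUnit_det_sqrt
  have hSS : ‖T S‖ * ‖T S‖ = ‖T B‖ := by
    rw [← CStarRing.norm_star_mul_self, ← map_star, ← map_mul, star_eq_conjTranspose,
      hB.posSemidef.posSemidef_sqrt.isHermitian.eq, hB.posSemidef.sqrt_mul_self]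
  have hX : X = S * (S⁻¹ * X * S⁻¹) * S := by
    rw [Matrix.mul_assoc, nonsing_inv_mul_cancel_right _ _ hS, mul_nonsing_inv_cancel_left _ _ hS]
  calc matSpectralNorm X = ‖T S * T (S⁻¹ * X * S⁻¹) * T S‖ := by
        rw [← map_mul, ← map_mul, ← hX]; rfl
    _ ≤ ‖T S‖ * ‖T (S⁻¹ * X * S⁻¹)‖ * ‖T S‖ := norm_mul₃_le
    _ = ‖T B‖ * ‖T (S⁻¹ * X * S⁻¹)‖ := by rw [← hSS]; ring

theorem stmt7_general (d : ℕ)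
    (B : Matrix (Fin d) (Fin d) ℝ) (hB : B.PosDef)
    (C : ℝ → Matrix (Fin d) (Fin d) ℝ)
    (hC : ∀ t, 0 ≤ t → HasDerivAt C (2 * C t - 2 * (C t * B⁻¹ * C t)) t)
    (hCpos : ∀ t, 0 ≤ t → (C t).PosDef) :
    ∀ t, 0 ≤ t →
      matSpectralNorm (C t) ≤ matSpectralNorm B *
        max 1 (matSpectralNorm ((hB.posSemidef.sqrt)⁻¹ * C 0 * (hB.posSemidef.sqrt)⁻¹)) := by
  intro t ht
  set P := hB.posSemidef.sqrt⁻¹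
  have hPH : Pᴴ = P := hB.posSemidef.posSemidef_sqrt.isHermitian.inv
  have hPP : P * P = B⁻¹ := by rw [← Matrix.mul_inv_rev, hB.posSemidef.sqrt_mul_self]
  let A s := Matrix.toEuclideanCLM (𝕜 := ℝ) (P * C s * P)
  have hA : ∀ s, 0 ≤ s → HasDerivAt A (2 * A s - 2 * (A s * A s)) s := fun s hs =>
    ((hC s hs).conj_of_riccati hPP).toEuclideanCLM.congr_deriv
      (by simp [A, map_sub, map_mul, map_ofNat])
  have hApos : ∀ s, 0 ≤ s → (A s).IsPositive := fun s hs =>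
    Matrix.isPositive_toEuclideanLin_iff.mpr <| by
      simpa only [hPH] using (hCpos s hs).posSemidef.conjTranspose_mul_mul_same P
  calc matSpectralNorm (C t) ≤ matSpectralNorm B * ‖A t‖ := matSpectralNorm_le_mul_conj_sqrt hB _
    _ ≤ _ := mul_le_mul_of_nonneg_left (norm_le_max_one_of_riccati hA hApos ht) (norm_nonneg _)

/-- Uniform spectral bound along the covariance Riccati flow:
`‖C(t)‖₂ ≤ ‖B‖₂ · max 1 ‖B^{-1/2} C(0) B^{-1/2}‖₂`. -/
theorem stmt7 (d : ℕ) (hd : 1 ≤ d)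
    (B : Matrix (Fin d) (Fin d) ℝ) (hB : B.PosDef)
    (C : ℝ → Matrix (Fin d) (Fin d) ℝ)
    (hC : ∀ t, 0 ≤ t → HasDerivAt C (2 * C t - 2 * (C t * B⁻¹ * C t)) t)
    (hCpos : ∀ t, 0 ≤ t → (C t).PosDef) :
    ∀ t, 0 ≤ t →
      matSpectralNorm (C t) ≤ matSpectralNorm B *
        max 1 (matSpectralNorm ((hB.posSemidef.sqrt)⁻¹ * C 0 * (hB.posSemidef.sqrt)⁻¹)) :=
  stmt7_general d B hB C hC hCpos
end

section
/- Explicit rotation-constrained moment geodesics with fixed mean: Let d ≥ 1, A₀ an invertible d×d real matrix, B any d×d real matrix, and set Z := (B + Bᵀ)/2 and Q := (B − Bᵀ)/2. Define A(t) := A₀ · exp(t B) · exp(−t Q) for t ∈ ℝ. Then for every t: (i) A(t) is invertible and A is differentiable; (ii) A(t)⁻¹ A'(t) = exp(t Q) · Z · exp(−t Q), and this matrix is symmetric (so the curve A is horizontal); (iii) ‖A(t)⁻¹ A'(t)‖_HS = ‖Z‖_HS, i.e. the action density is constant; (iv) the geodesic equation d/dt ( A(t)⁻¹ A'(t) ) =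 Q (A(t)⁻¹ A'(t)) − (A(t)⁻¹ A'(t)) Q holds (the Euler–Lagrange equation of the rotation-constrained moment problem with zero mean velocity, with skew-symmetric multiplier −Q). -/
/-!
Writing `B = Z + Q`, the left logarithmic derivative of `A(t) = A₀ e^{tB} e^{-tQ}` is
`e^{tQ} (B - Q) e^{-tQ} = e^{tQ} Z e^{-tQ}`. Since `Q` is skew-symmetric, `e^{tQ}` is orthogonal with
inverse `e^{-tQ} = (e^{tQ})ᵀ`, so this is an orthogonal conjugate of the symmetric matrix `Z`:
it is symmetric and has the Frobenius norm of `Z`. Differentiating the conjugation `e^{tQ} Z e^{-tQ}`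
gives the commutator with `Q`.
-/

open Matrix

attribute [local instance] Matrix.normedAddCommGroup Matrix.normedSpace

/-- The squared Frobenius (Hilbert-Schmidt) norm of a real square matrix. -/
noncomputable def frobeniusNormSq {d : ℕ} (M : Matrix (Fin d) (Fin d) ℝ) : ℝ :=
  Matrix.trace (Mᵀ * M)

namespace NormedSpace

variable {𝕂 𝔸 : Type*} [RCLike 𝕂] [NormedRing 𝔸] [NormedAlgebra 𝕂 𝔸] [CompleteSpace 𝔸]

theorem hasDerivAt_exp_neg_smul_const (x : 𝔸) (t : 𝕂) :
    HasDerivAt (fun u : 𝕂 => exp (-(u • x))) (exp (-(t • x)) * -x) t := by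
  simpa only [smul_neg] using hasDerivAt_exp_smul_const (-x) t

theorem hasDerivAt_mul_exp_smul_mul_exp_neg_smul (a x y : 𝔸) (t : 𝕂) :
    HasDerivAt (fun u : 𝕂 => a * exp (u • x) * exp (-(u • y)))
      (a * exp (t • x) * (x - y) * exp (-(t • y))) t := by
  have hy : y * exp (-(t • y)) = exp (-(t • y)) * y :=
    ((Commute.refl y).smul_right t).neg_right.exp_right.eq
  refine (((hasDerivAt_exp_smul_const x t).const_mul a).mul
    (hasDerivAt_exp_neg_smul_const y t)).congr_deriv ?_
  rw [mul_sub, sub_mul, mul_assoc _ y, hy]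
  noncomm_ring

theorem hasDerivAt_exp_smul_mul_mul_exp_neg_smul (x z : 𝔸) (t : 𝕂) :
    HasDerivAt (fun u : 𝕂 => exp (u • x) * z * exp (-(u • x)))
      (x * (exp (t • x) * z * exp (-(t • x))) - exp (t • x) * z * exp (-(t • x)) * x) t := by
  refine (((hasDerivAt_exp_smul_const' x t).mul_const z).mul
    (hasDerivAt_exp_neg_smul_const x t)).congr_deriv ?_
  noncomm_ring

end NormedSpace

namespace Matrix

open NormedSpace

theorem IsSymm.mul_mul_transpose {m n α : Type*} [Fintype m] [CommSemiring α] {Z : Matrix m m α}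
    (hZ : Z.IsSymm) (U : Matrix n m α) : (U * Z * Uᵀ).IsSymm := by
  rw [IsSymm, transpose_mul, transpose_mul, transpose_transpose, hZ.eq, Matrix.mul_assoc]

variable {m 𝕂 : Type*} [Fintype m] [DecidableEq m] [RCLike 𝕂]

theorem exp_neg_mul_exp (A : Matrix m m 𝕂) : exp (-A) * exp A = 1 := by
  rw [exp_neg]
  exact nonsing_inv_mul _ ((isUnit_iff_isUnit_det _).mp (isUnit_exp A))

theorem transpose_exp_smul_of_transpose_eq_neg {Q : Matrix m m 𝕂} (hQ : Qᵀ = -Q) (t : 𝕂) :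
    (exp (t • Q))ᵀ = exp (-(t • Q)) := by
  rw [← exp_transpose, transpose_smul, hQ, smul_neg]

section LinftyOpNorm

/- The calculus of `NormedSpace.exp` needs a Banach-algebra norm; the operator norm induces the
same topology on matrices as the entrywise norm. -/
attribute [-instance] Matrix.normedAddCommGroup Matrix.normedSpace
attribute [local instance] Matrix.linftyOpNormedRing Matrix.linftyOpNormedAlgebra

theorem hasDerivAt_mul_exp_smul_mul_exp_neg_smul (A B Q : Matrix m m 𝕂) (t : 𝕂) :
    HasDerivAt (fun s : 𝕂 => A * exp (s • B) * exp (-(s • Q)))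
      (A * exp (t • B) * (B - Q) * exp (-(t • Q))) t :=
  NormedSpace.hasDerivAt_mul_exp_smul_mul_exp_neg_smul A B Q t

theorem hasDerivAt_exp_smul_mul_mul_exp_neg_smul (Q Z : Matrix m m 𝕂) (t : 𝕂) :
    HasDerivAt (fun s : 𝕂 => exp (s • Q) * Z * exp (-(s • Q)))
      (Q * (exp (t • Q) * Z * exp (-(t • Q))) - exp (t • Q) * Z * exp (-(t • Q)) * Q) t :=
  NormedSpace.hasDerivAt_exp_smul_mul_mul_exp_neg_smul Q Z t

end LinftyOpNorm

end Matrix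

theorem frobeniusNormSq_mul_mul_transpose {d : ℕ} {U : Matrix (Fin d) (Fin d) ℝ}
    (hU : Uᵀ * U = 1) (M : Matrix (Fin d) (Fin d) ℝ) :
    frobeniusNormSq (U * M * Uᵀ) = frobeniusNormSq M := by
  unfold frobeniusNormSq
  calc trace ((U * M * Uᵀ)ᵀ * (U * M * Uᵀ)) = trace (U * (Mᵀ * M) * Uᵀ) := by
        simp only [transpose_mul, transpose_transpose, Matrix.mul_assoc,
          ← Matrix.mul_assoc Uᵀ U, hU, Matrix.one_mul]
    _ = trace (Uᵀ * U * (Mᵀ * M)) := by rw [trace_mul_comm, Matrix.mul_assoc]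
    _ = trace (Mᵀ * M) := by rw [hU, Matrix.one_mul]

theorem stmt13_general (d : ℕ)
    (A₀ : Matrix (Fin d) (Fin d) ℝ) (hA₀ : IsUnit A₀)
    (B : Matrix (Fin d) (Fin d) ℝ)
    (Z Q : Matrix (Fin d) (Fin d) ℝ)
    (hZ : Z = ((1 : ℝ) / 2) • (B + Bᵀ)) (hQ : Q = ((1 : ℝ) / 2) • (B - Bᵀ))
    (A : ℝ → Matrix (Fin d) (Fin d) ℝ)
    (hAdef : ∀ t, A t = A₀ * NormedSpace.exp (t • B) * NormedSpace.exp (-(t • Q))) :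
    (∀ t, IsUnit (A t)) ∧
    ∃ A' : ℝ → Matrix (Fin d) (Fin d) ℝ,
      (∀ t, HasDerivAt A (A' t) t) ∧
      (∀ t, (A t)⁻¹ * A' t = NormedSpace.exp (t • Q) * Z * NormedSpace.exp (-(t • Q))) ∧
      (∀ t, ((A t)⁻¹ * A' t)ᵀ = (A t)⁻¹ * A' t) ∧
      (∀ t, Real.sqrt (frobeniusNormSq ((A t)⁻¹ * A' t)) = Real.sqrt (frobeniusNormSq Z)) ∧
      (∀ t, HasDerivAt (fun s => (A s)⁻¹ * A' s)
        (Q * ((A t)⁻¹ * A' t) - ((A t)⁻¹ * A' t) * Q) t) := by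
  open NormedSpace in
  have hZsymm : Z.IsSymm := hZ ▸ (isSymm_add_transpose_self B).smul _
  have hQskew : Qᵀ = -Q := by
    rw [hQ, transpose_smul, transpose_sub, transpose_transpose, ← smul_neg, neg_sub]
  have hBQ : B - Q = Z := by rw [hZ, hQ]; module
  set M : ℝ → Matrix (Fin d) (Fin d) ℝ := fun t => exp (t • Q) * Z * exp (-(t • Q)) with hM
  have hMconj : ∀ t, M t = exp (t • Q) * Z * (exp (t • Q))ᵀ := fun t => by
    rw [transpose_exp_smul_of_transpose_eq_neg hQskew]
  have horth : ∀ t : ℝ, (exp (t • Q))ᵀ * exp (t • Q) = 1 := fun t => by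
    rw [transpose_exp_smul_of_transpose_eq_neg hQskew, exp_neg_mul_exp]
  have hunit : ∀ t, IsUnit (A t) := fun t =>
    hAdef t ▸ (hA₀.mul (isUnit_exp _)).mul (isUnit_exp _)
  have hlog : ∀ t, (A t)⁻¹ * (A t * M t) = M t := fun t =>
    nonsing_inv_mul_cancel_left _ _ ((isUnit_iff_isUnit_det _).mp (hunit t))
  have hderiv : ∀ t, HasDerivAt A (A t * M t) t := fun t => by
    rw [funext hAdef]
    refine (hasDerivAt_mul_exp_smul_mul_exp_neg_smul A₀ B Q t).congr_deriv ?_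
    simp only [hM, hBQ, Matrix.mul_assoc, ← Matrix.mul_assoc (exp (-(t • Q))), exp_neg_mul_exp,
      Matrix.one_mul]
  refine ⟨hunit, fun t => A t * M t, hderiv, hlog, fun t => ?_, fun t => ?_, fun t => ?_⟩
  · rw [hlog, hMconj]
    exact (hZsymm.mul_mul_transpose _).eq
  · rw [hlog, hMconj, frobeniusNormSq_mul_mul_transpose (horth t)]
  · simp only [hlog]
    exact hasDerivAt_exp_smul_mul_mul_exp_neg_smul Q Z t

/-- Explicit rotation-constrained moment geodesics with fixed mean:
`A(t) = A₀ · exp(t B) · exp(-t Q)` with `Z = (B + Bᵀ)/2`, `Q = (B - Bᵀ)/2` is a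
horizontal curve with `A⁻¹A' = exp(tQ) Z exp(-tQ)` symmetric, constant Frobenius
action density `‖Z‖_HS`, and satisfies `d/dt(A⁻¹A') = Q(A⁻¹A') - (A⁻¹A')Q`. -/
theorem stmt13 (d : ℕ) (hd : 1 ≤ d)
    (A₀ : Matrix (Fin d) (Fin d) ℝ) (hA₀ : IsUnit A₀)
    (B : Matrix (Fin d) (Fin d) ℝ)
    (Z Q : Matrix (Fin d) (Fin d) ℝ)
    (hZ : Z = ((1 : ℝ) / 2) • (B + Bᵀ)) (hQ : Q = ((1 : ℝ) / 2) • (B - Bᵀ))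
    (A : ℝ → Matrix (Fin d) (Fin d) ℝ)
    (hAdef : ∀ t, A t = A₀ * NormedSpace.exp (t • B) * NormedSpace.exp (-(t • Q))) :
    (∀ t, IsUnit (A t)) ∧
    ∃ A' : ℝ → Matrix (Fin d) (Fin d) ℝ,
      (∀ t, HasDerivAt A (A' t) t) ∧
      (∀ t, (A t)⁻¹ * A' t = NormedSpace.exp (t • Q) * Z * NormedSpace.exp (-(t • Q))) ∧
      (∀ t, ((A t)⁻¹ * A' t)ᵀ = (A t)⁻¹ * A' t) ∧
      (∀ t, Real.sqrt (frobeniusNormSq ((A t)⁻¹ * A' t)) = Real.sqrt (frobeniusNormSq Z)) ∧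
      (∀ t, HasDerivAt (fun s => (A s)⁻¹ * A' s)
        (Q * ((A t)⁻¹ * A' t) - ((A t)⁻¹ * A' t) * Q) t) :=
  stmt13_general d A₀ hA₀ B Z Q hZ hQ A hAdef
end

section
/- Two-sided covariance bound along finite-action horizontal curves: Let d ≥ 1, let m : [0,1] → ℝ^d and A : [0,1] → d×d real matrices with A(t) invertible for every t ∈ [0,1], and suppose there are integrable functions m' : [0,1] → ℝ^d and A' : [0,1] → d×d matrices such that m(t) = m(0) + ∫₀ᵗ m'(s) ds and A(t) = A(0) + ∫₀ᵗ A'(s) ds for all t ∈ [0,1]. Set I := ∫₀¹ ( |A(t)⁻¹ m'(t)|² + ‖A(t)⁻¹ A'(t)‖_HS² ) dt and assume I < ∞. Then for every t ∈ [0,1]: e^{−2√I} · A(0) A(0)ᵀ ⪯ A(t) A(t)ᵀ ⪯ e^{2√I} · A(0) A(0)ᵀ, where X ⪯ Y means that Y − X is positive semidefinite. -/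
open Matrix MeasureTheory

attribute [local instance] Matrix.normedAddCommGroup Matrix.normedSpace

/-!
Fix `x` and follow the row vector `y(t) = xᵀ A(t)` in Euclidean space. It is absolutely continuous
with `y' = xᵀ A' = y (A⁻¹ A')`, so `|(log |y|)'| ≤ |y'| / |y| ≤ ‖A⁻¹ A'‖_HS` almost everywhere.
Integrating, and bounding `∫₀¹ ‖A⁻¹ A'‖_HS ≤ (∫₀¹ ‖A⁻¹ A'‖_HS²)^{1/2} ≤ √I` by Cauchy–Schwarz,
gives `e^{-√I} |y(0)| ≤ |y(t)| ≤ e^{√I} |y(0)|`. Since `|y(t)|² = xᵀ A(t) A(t)ᵀ x`, squaring is the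
two-sided bound in the Loewner order.
-/

open Set Filter

section AbsolutelyContinuous

variable {X Y : Type*} [PseudoMetricSpace X] [PseudoMetricSpace Y] {a b : ℝ}

theorem AbsolutelyContinuousOnInterval.of_dist_le_mul {f : ℝ → X} {g : ℝ → Y} {K : ℝ}
    (hg : AbsolutelyContinuousOnInterval g a b)
    (hfg : ∀ s ∈ uIcc a b, ∀ t ∈ uIcc a b, dist (f s) (f t) ≤ K * dist (g s) (g t)) :
    AbsolutelyContinuousOnInterval f a b := by
  unfold AbsolutelyContinuousOnInterval at hg ⊢
  refine squeeze_zero' (Eventually.of_forall fun _ ↦ Finset.sum_nonneg fun _ _ ↦ dist_nonneg)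
    ?_ (by simpa using hg.const_mul K)
  rw [eventually_inf_principal]
  filter_upwards with E hE
  rw [Finset.mul_sum]
  exact Finset.sum_le_sum fun i hi ↦ hfg _ (hE.1 i hi).1 _ (hE.1 i hi).2

theorem LipschitzWith.comp_absolutelyContinuousOnInterval {φ : X → Y} {K : NNReal}
    (hφ : LipschitzWith K φ) {g : ℝ → X} (hg : AbsolutelyContinuousOnInterval g a b) :
    AbsolutelyContinuousOnInterval (fun t ↦ φ (g t)) a b :=
  hg.of_dist_le_mul fun s _ t _ ↦ hφ.dist_le_mul (g s) (g t)

theorem uIcc_mem_nhds {t : ℝ} (ht : t ∈ uIcc a b) (hta : t ≠ a) (htb : t ≠ b) :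
    uIcc a b ∈ nhds t := by
  rcases mem_uIcc.1 ht with ⟨h₁, h₂⟩ | ⟨h₁, h₂⟩
  · exact Filter.mem_of_superset (Ioo_mem_nhds (h₁.lt_of_ne' hta) (h₂.lt_of_ne htb))
      (Ioo_subset_Icc_self.trans Icc_subset_uIcc)
  · exact Filter.mem_of_superset (Ioo_mem_nhds (h₁.lt_of_ne' htb) (h₂.lt_of_ne hta))
      (Ioo_subset_Icc_self.trans Icc_subset_uIcc')

variable {E : Type*} [NormedAddCommGroup E] [NormedSpace ℝ E] {F f : ℝ → E}

theorem IntervalIntegrable.absolutelyContinuousOnInterval_of_eq_add_integral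
    (hf : IntervalIntegrable f volume a b)
    (hF : ∀ t ∈ uIcc a b, F t = F a + ∫ s in a..t, f s) :
    AbsolutelyContinuousOnInterval F a b := by
  refine (hf.norm.absolutelyContinuousOnInterval_intervalIntegral left_mem_uIcc).of_dist_le_mul
    (K := 1) fun s hs t ht ↦ ?_
  have hint : ∀ u ∈ uIcc a b, IntervalIntegrable f volume a u :=
    fun u hu ↦ hf.mono_set (uIcc_subset_uIcc_left hu)
  rw [one_mul, dist_eq_norm, dist_eq_norm, hF s hs, hF t ht, add_sub_add_left_eq_sub,
    intervalIntegral.integral_interval_sub_left (hint s hs) (hint t ht),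
    intervalIntegral.integral_interval_sub_left (hint s hs).norm (hint t ht).norm,
    Real.norm_eq_abs]
  exact intervalIntegral.norm_integral_le_abs_integral_norm

theorem IntervalIntegrable.ae_hasDerivAt_of_eq_add_integral [CompleteSpace E]
    (hf : IntervalIntegrable f volume a b)
    (hF : ∀ t ∈ uIcc a b, F t = F a + ∫ s in a..t, f s) :
    ∀ᵐ t, t ∈ uIcc a b → HasDerivAt F (f t) t := by
  have ha : ∀ᵐ t, t ≠ a := by simp [ae_iff, measure_singleton]
  have hb : ∀ᵐ t, t ≠ b := by simp [ae_iff, measure_singleton]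
  filter_upwards [hf.ae_hasDerivAt_integral, ha, hb] with t hderiv hta htb ht
  exact ((hderiv ht a left_mem_uIcc).const_add (F a)).congr_of_eventuallyEq
    (eventually_of_mem (uIcc_mem_nhds ht hta htb) hF)

end AbsolutelyContinuous

section LogNorm

theorem Real.abs_log_sub_log_le {c u v : ℝ} (hc : 0 < c) (hu : c ≤ u) (hv : c ≤ v) :
    |Real.log u - Real.log v| ≤ |u - v| / c := by
  wlog huv : u ≤ v generalizing u v
  · rw [abs_sub_comm, abs_sub_comm u]; exact this hv hu (le_of_not_ge huv)
  have hu0 : 0 < u := hc.trans_le hu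
  rw [abs_of_nonpos (sub_nonpos.2 (Real.log_le_log hu0 huv)), abs_of_nonpos (by linarith),
    neg_sub, neg_sub, ← Real.log_div (hu0.trans_le huv).ne' hu0.ne']
  calc Real.log (v / u) ≤ v / u - 1 := Real.log_le_sub_one_of_pos (div_pos (hu0.trans_le huv) hu0)
    _ = (v - u) / u := by field_simp
    _ ≤ (v - u) / c := by gcongr

theorem Real.le_exp_mul_of_abs_log_sub_le {u v c : ℝ} (hu : 0 ≤ u) (hv : 0 < v)
    (h : |Real.log u - Real.log v| ≤ c) : u ≤ Real.exp c * v := by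
  rcases hu.eq_or_lt with rfl | hu
  · positivity
  calc u = Real.exp (Real.log u) := (Real.exp_log hu).symm
    _ ≤ Real.exp (c + Real.log v) := Real.exp_le_exp.2 (by linarith [(abs_le.1 h).2])
    _ = Real.exp c * v := by rw [Real.exp_add, Real.exp_log hv]

variable {E : Type*} [NormedAddCommGroup E] {y : ℝ → E} {a b : ℝ}

theorem AbsolutelyContinuousOnInterval.log_norm (hy : AbsolutelyContinuousOnInterval y a b)
    (hy0 : ∀ t ∈ uIcc a b, y t ≠ 0) :
    AbsolutelyContinuousOnInterval (fun t ↦ Real.log ‖y t‖) a b := by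
  obtain ⟨t₀, ht₀, hmin⟩ := isCompact_uIcc.exists_isMinOn nonempty_uIcc hy.continuousOn.norm
  have hc : 0 < ‖y t₀‖ := norm_pos_iff.2 (hy0 t₀ ht₀)
  refine hy.of_dist_le_mul (K := ‖y t₀‖⁻¹) fun s hs t ht ↦ ?_
  rw [Real.dist_eq, dist_eq_norm, ← div_eq_inv_mul]
  calc |Real.log ‖y s‖ - Real.log ‖y t‖| ≤ |‖y s‖ - ‖y t‖| / ‖y t₀‖ :=
        Real.abs_log_sub_log_le hc (hmin hs) (hmin ht)
    _ ≤ ‖y s - y t‖ / ‖y t₀‖ := by gcongr; exact abs_norm_sub_norm_le _ _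

variable [InnerProductSpace ℝ E]

theorem abs_deriv_log_norm_le {y' : E} {t : ℝ} (hy : HasDerivAt y y' t) (hyt : y t ≠ 0) :
    |deriv (fun s ↦ Real.log ‖y s‖) t| ≤ ‖y'‖ / ‖y t‖ := by
  have hpos : 0 < ‖y t‖ := norm_pos_iff.2 hyt
  have hlog : (fun s ↦ Real.log ‖y s‖) = fun s ↦ Real.log (‖y s‖ ^ 2) / 2 := by
    funext s; rw [Real.log_pow]; push_cast; ring
  rw [hlog, ((hy.norm_sq.log (by positivity)).div_const 2).deriv, abs_div, abs_div, abs_mul,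
    abs_two, abs_of_pos (by positivity : 0 < ‖y t‖ ^ 2)]
  calc 2 * |inner ℝ (y t) y'| / ‖y t‖ ^ 2 / 2 = |inner ℝ (y t) y'| / ‖y t‖ ^ 2 := by ring
    _ ≤ ‖y t‖ * ‖y'‖ / ‖y t‖ ^ 2 := by gcongr; exact abs_real_inner_le_norm _ _
    _ = ‖y'‖ / ‖y t‖ := by field_simp

theorem abs_log_norm_sub_le_integral {y' : ℝ → E} {k : ℝ → ℝ} (hab : a ≤ b)
    (hy : AbsolutelyContinuousOnInterval y a b) (hy0 : ∀ t ∈ uIcc a b, y t ≠ 0)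
    (hy' : ∀ᵐ t, t ∈ uIcc a b → HasDerivAt y (y' t) t) (hk : IntervalIntegrable k volume a b)
    (hy'k : ∀ t ∈ uIcc a b, ‖y' t‖ ≤ k t * ‖y t‖) :
    |Real.log ‖y b‖ - Real.log ‖y a‖| ≤ ∫ t in a..b, k t := by
  have hlog := hy.log_norm hy0
  have hbound : ∀ᵐ t ∂volume.restrict (Icc a b), |deriv (fun s ↦ Real.log ‖y s‖) t| ≤ k t := by
    rw [ae_restrict_iff' measurableSet_Icc]
    filter_upwards [hy'] with t hderiv ht
    rw [← uIcc_of_le hab] at ht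
    calc |deriv (fun s ↦ Real.log ‖y s‖) t| ≤ ‖y' t‖ / ‖y t‖ :=
          abs_deriv_log_norm_le (hderiv ht) (hy0 t ht)
      _ ≤ k t := (div_le_iff₀ (norm_pos_iff.2 (hy0 t ht))).2 (hy'k t ht)
  rw [← hlog.integral_deriv_eq_sub]
  exact (intervalIntegral.abs_integral_le_integral_abs hab).trans
    (intervalIntegral.integral_mono_ae_restrict hab hlog.intervalIntegrable_deriv.abs hk hbound)

end LogNorm

section CauchySchwarz

variable {a b : ℝ}

theorem IntervalIntegrable.sqrt {F : ℝ → ℝ} (hab : a ≤ b) (hF : IntervalIntegrable F volume a b)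
    (hF0 : ∀ t, 0 ≤ F t) : IntervalIntegrable (fun t ↦ √(F t)) volume a b := by
  rw [intervalIntegrable_iff_integrableOn_Ioc_of_le hab] at hF ⊢
  have hsqrt : MemLp (fun t ↦ √(F t)) 2 (volume.restrict (Ioc a b)) :=
    (memLp_two_iff_integrable_sq (Real.continuous_sqrt.comp_aestronglyMeasurable
      hF.aestronglyMeasurable)).2 (hF.congr (ae_of_all _ fun t ↦ (Real.sq_sqrt (hF0 t)).symm))
  exact hsqrt.integrable one_le_two

theorem sq_intervalIntegral_le {g : ℝ → ℝ} (hab : a ≤ b) (hg : IntervalIntegrable g volume a b)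
    (hg2 : IntervalIntegrable (fun t ↦ g t ^ 2) volume a b) :
    (∫ t in a..b, g t) ^ 2 ≤ (b - a) * ∫ t in a..b, g t ^ 2 := by
  set m := ∫ t in a..b, g t
  rcases hab.eq_or_lt with rfl | hlt
  · simp [m]
  have hvar : 0 ≤ ∫ t in a..b, ((b - a) * g t - m) ^ 2 :=
    intervalIntegral.integral_nonneg hab fun _ _ ↦ sq_nonneg _
  have hexpand : ∫ t in a..b, ((b - a) * g t - m) ^ 2 =
      (b - a) * ((b - a) * ∫ t in a..b, g t ^ 2) - (b - a) * m ^ 2 := by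
    calc ∫ t in a..b, ((b - a) * g t - m) ^ 2
        = ∫ t in a..b, ((b - a) ^ 2 * g t ^ 2 - 2 * (b - a) * m * g t + m ^ 2) :=
          intervalIntegral.integral_congr fun _ _ ↦ by ring
      _ = (b - a) ^ 2 * (∫ t in a..b, g t ^ 2) - 2 * (b - a) * m * m + (b - a) * m ^ 2 := by
          rw [intervalIntegral.integral_add ((hg2.const_mul _).sub (hg.const_mul _))
              intervalIntegrable_const, intervalIntegral.integral_sub (hg2.const_mul _)
              (hg.const_mul _), intervalIntegral.integral_const_mul,
            intervalIntegral.integral_const_mul, intervalIntegral.integral_const, smul_eq_mul]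
      _ = _ := by ring
  nlinarith [sub_pos.2 hlt]

theorem intervalIntegral_sqrt_le {F q : ℝ → ℝ} (hab : a ≤ b)
    (hF : IntervalIntegrable F volume a b) (hF0 : ∀ t, 0 ≤ F t)
    (hq : IntervalIntegrable q volume a b) (hFq : ∀ t, F t ≤ q t) :
    ∫ t in a..b, √(F t) ≤ √((b - a) * ∫ t in a..b, q t) := by
  have hsq : ∀ t, √(F t) ^ 2 = F t := fun t ↦ Real.sq_sqrt (hF0 t)
  refine Real.le_sqrt_of_sq_le ?_
  calc _ ≤ (b - a) * ∫ t in a..b, √(F t) ^ 2 :=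
        sq_intervalIntegral_le hab (hF.sqrt hab hF0) (by simpa only [hsq])
    _ ≤ (b - a) * ∫ t in a..b, q t := by
        simp only [hsq]
        gcongr
        exact intervalIntegral.integral_mono_on hab hF hq fun t _ ↦ hFq t

end CauchySchwarz

section MatrixCurve

theorem frobeniusNormSq_eq_sum {d : ℕ} (M : Matrix (Fin d) (Fin d) ℝ) :
    frobeniusNormSq M = ∑ j, ∑ i, M i j ^ 2 := by
  simp [frobeniusNormSq, Matrix.trace, Matrix.mul_apply, sq]

theorem frobeniusNormSq_nonneg {d : ℕ} (M : Matrix (Fin d) (Fin d) ℝ) :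
    0 ≤ frobeniusNormSq M := by
  rw [frobeniusNormSq_eq_sum]; positivity

theorem continuous_frobeniusNormSq {d : ℕ} :
    Continuous fun M : Matrix (Fin d) (Fin d) ℝ ↦ frobeniusNormSq M :=
  (continuous_id.matrix_transpose.matrix_mul continuous_id).matrix_trace

theorem norm_toLp_vecMul_le {d : ℕ} (v : Fin d → ℝ) (M : Matrix (Fin d) (Fin d) ℝ) :
    ‖WithLp.toLp 2 (v ᵥ* M)‖ ≤ √(frobeniusNormSq M) * ‖WithLp.toLp 2 v‖ := by
  simp only [EuclideanSpace.norm_eq, Real.norm_eq_abs, sq_abs]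
  rw [← Real.sqrt_mul (frobeniusNormSq_nonneg M), frobeniusNormSq_eq_sum, Finset.sum_mul]
  refine Real.sqrt_le_sqrt (Finset.sum_le_sum fun j _ ↦ ?_)
  simpa [Matrix.vecMul, dotProduct, mul_comm] using
    Finset.sum_mul_sq_le_sq_mul_sq Finset.univ (fun i ↦ M i j) v

theorem toLp_vecMul_ne_zero {n : Type*} [Fintype n] [DecidableEq n] {B : Matrix n n ℝ}
    (hB : IsUnit B) {x : n → ℝ} (hx : x ≠ 0) : WithLp.toLp 2 (x ᵥ* B) ≠ 0 := by
  rw [Ne, WithLp.toLp_eq_zero, ← Matrix.zero_vecMul B]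
  exact (Matrix.vecMul_injective_of_isUnit hB).ne hx

theorem ContinuousOn.matrix_inv {n : Type*} [Fintype n] [DecidableEq n] {A : ℝ → Matrix n n ℝ}
    {s : Set ℝ} (hA : ContinuousOn A s) (hAunit : ∀ t ∈ s, IsUnit (A t)) :
    ContinuousOn (fun t ↦ (A t)⁻¹) s := fun t ht ↦
  (continuousAt_matrix_inv (A t) (NormedRing.inverse_continuousAt
    ((Matrix.isUnit_iff_isUnit_det _).1 (hAunit t ht)).unit)).comp_continuousWithinAt (hA t ht)

theorem intervalIntegrable_frobeniusNormSq_inv_mul {d : ℕ} {A A' : ℝ → Matrix (Fin d) (Fin d) ℝ}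
    {q : ℝ → ℝ} {a b : ℝ} (hab : a ≤ b) (hA : ContinuousOn A (Icc a b))
    (hAunit : ∀ t ∈ Icc a b, IsUnit (A t))
    (hA' : AEStronglyMeasurable A' (volume.restrict (Ioc a b)))
    (hq : IntervalIntegrable q volume a b) (hFq : ∀ t, frobeniusNormSq ((A t)⁻¹ * A' t) ≤ q t) :
    IntervalIntegrable (fun t ↦ frobeniusNormSq ((A t)⁻¹ * A' t)) volume a b := by
  rw [intervalIntegrable_iff_integrableOn_Ioc_of_le hab] at hq ⊢
  -- no metrizability instance is synthesized for the global (product) topology on `Matrix`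
  have : TopologicalSpace.PseudoMetrizableSpace (Matrix (Fin d) (Fin d) ℝ) :=
    inferInstanceAs (TopologicalSpace.PseudoMetrizableSpace (Fin d → Fin d → ℝ))
  have hAinv : AEStronglyMeasurable (fun t ↦ (A t)⁻¹) (volume.restrict (Ioc a b)) :=
    ((hA.matrix_inv hAunit).mono Ioc_subset_Icc_self).aestronglyMeasurable measurableSet_Ioc
  refine hq.mono' (continuous_frobeniusNormSq.comp_aestronglyMeasurable
    ((continuous_fst.matrix_mul continuous_snd).comp_aestronglyMeasurable (hAinv.prodMk hA')))
    (ae_of_all _ fun t ↦ ?_)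
  rw [Real.norm_of_nonneg (frobeniusNormSq_nonneg _)]
  exact hFq t

noncomputable def vecMulCLM {m n : Type*} [Fintype m] [Fintype n] (x : m → ℝ) :
    Matrix m n ℝ →L[ℝ] EuclideanSpace ℝ n :=
  LinearMap.toContinuousLinearMap
    { toFun := fun M ↦ WithLp.toLp 2 (x ᵥ* M)
      map_add' := fun M N ↦ by simp [Matrix.vecMul_add]
      map_smul' := fun c M ↦ by simp [Matrix.vecMul_smul] }

theorem vecMulCLM_apply {m n : Type*} [Fintype m] [Fintype n] (x : m → ℝ) (M : Matrix m n ℝ) :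
    vecMulCLM x M = WithLp.toLp 2 (x ᵥ* M) := rfl

theorem abs_log_norm_vecMul_sub_le_integral {d : ℕ} {A A' : ℝ → Matrix (Fin d) (Fin d) ℝ}
    {a b : ℝ} (hab : a ≤ b) (hAunit : ∀ t ∈ uIcc a b, IsUnit (A t))
    (hA : AbsolutelyContinuousOnInterval A a b) (hA' : ∀ᵐ t, t ∈ uIcc a b → HasDerivAt A (A' t) t)
    (hk : IntervalIntegrable (fun t ↦ √(frobeniusNormSq ((A t)⁻¹ * A' t))) volume a b)
    {x : Fin d → ℝ} (hx : x ≠ 0) :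
    |Real.log ‖WithLp.toLp 2 (x ᵥ* A b)‖ - Real.log ‖WithLp.toLp 2 (x ᵥ* A a)‖| ≤
      ∫ t in a..b, √(frobeniusNormSq ((A t)⁻¹ * A' t)) := by
  have hne : ∀ t ∈ uIcc a b, vecMulCLM x (A t) ≠ 0 :=
    fun t ht ↦ toLp_vecMul_ne_zero (hAunit t ht) hx
  have hderiv : ∀ᵐ t, t ∈ uIcc a b →
      HasDerivAt (fun t ↦ vecMulCLM x (A t)) (vecMulCLM x (A' t)) t := by
    filter_upwards [hA'] with t hderiv ht
    exact (vecMulCLM x).hasFDerivAt.comp_hasDerivAt t (hderiv ht)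
  have hbound : ∀ t ∈ uIcc a b, ‖vecMulCLM x (A' t)‖ ≤
      √(frobeniusNormSq ((A t)⁻¹ * A' t)) * ‖vecMulCLM x (A t)‖ := fun t ht ↦ by
    have hA't : x ᵥ* A' t = x ᵥ* A t ᵥ* ((A t)⁻¹ * A' t) := by
      rw [Matrix.vecMul_vecMul, Matrix.mul_nonsing_inv_cancel_left _ _
        ((Matrix.isUnit_iff_isUnit_det _).1 (hAunit t ht))]
    rw [vecMulCLM_apply, vecMulCLM_apply, hA't]
    exact norm_toLp_vecMul_le _ _
  rw [← vecMulCLM_apply, ← vecMulCLM_apply]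
  have hy := (vecMulCLM x).lipschitz.comp_absolutelyContinuousOnInterval hA
  exact abs_log_norm_sub_le_integral hab hy hne hderiv hk hbound

end MatrixCurve

section Loewner

variable {n : Type*} [Fintype n]

theorem dotProduct_mul_transpose_mulVec (B : Matrix n n ℝ) (x : n → ℝ) :
    x ⬝ᵥ (B * Bᵀ) *ᵥ x = ‖WithLp.toLp 2 (x ᵥ* B)‖ ^ 2 := by
  rw [← Matrix.mulVec_mulVec, Matrix.dotProduct_mulVec, Matrix.mulVec_transpose,
    EuclideanSpace.real_norm_sq_eq]
  simp [dotProduct, sq]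

theorem Matrix.posSemidef_sub_of_dotProduct_mulVec_le {M N : Matrix n n ℝ} (hM : M.IsHermitian)
    (hN : N.IsHermitian) (h : ∀ x, x ⬝ᵥ N *ᵥ x ≤ x ⬝ᵥ M *ᵥ x) : (M - N).PosSemidef := by
  refine Matrix.posSemidef_iff_dotProduct_mulVec.2 ⟨hM.sub hN, fun x ↦ ?_⟩
  rw [star_trivial, Matrix.sub_mulVec, dotProduct_sub, sub_nonneg]
  exact h x

theorem norm_toLp_vecMul_le_exp_mul [DecidableEq n] {B C : Matrix n n ℝ} {c : ℝ} (hC : IsUnit C)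
    (h : ∀ x ≠ 0,
      |Real.log ‖WithLp.toLp 2 (x ᵥ* B)‖ - Real.log ‖WithLp.toLp 2 (x ᵥ* C)‖| ≤ c)
    (x : n → ℝ) : ‖WithLp.toLp 2 (x ᵥ* B)‖ ≤ Real.exp c * ‖WithLp.toLp 2 (x ᵥ* C)‖ := by
  rcases eq_or_ne x 0 with rfl | hx
  · simp
  exact Real.le_exp_mul_of_abs_log_sub_le (norm_nonneg _)
    (norm_pos_iff.2 (toLp_vecMul_ne_zero hC hx)) (h x hx)

theorem posSemidef_mul_transpose_sandwich {B C : Matrix n n ℝ} {c : ℝ}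
    (hBC : ∀ x, ‖WithLp.toLp 2 (x ᵥ* B)‖ ≤ Real.exp c * ‖WithLp.toLp 2 (x ᵥ* C)‖)
    (hCB : ∀ x, ‖WithLp.toLp 2 (x ᵥ* C)‖ ≤ Real.exp c * ‖WithLp.toLp 2 (x ᵥ* B)‖) :
    (B * Bᵀ - Real.exp (-2 * c) • (C * Cᵀ)).PosSemidef ∧
      (Real.exp (2 * c) • (C * Cᵀ) - B * Bᵀ).PosSemidef := by
  have hherm : ∀ D : Matrix n n ℝ, (D * Dᵀ).IsHermitian := fun D ↦ by
    simpa [Matrix.conjTranspose_eq_transpose_of_trivial] using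
      Matrix.isHermitian_mul_conjTranspose_self D
  have hsmul : ∀ (r : ℝ) (D : Matrix n n ℝ), (r • (D * Dᵀ)).IsHermitian :=
    fun r D ↦ (hherm D).smul (IsSelfAdjoint.all r)
  have hsq : Real.exp c ^ 2 = Real.exp (2 * c) := by rw [sq, ← Real.exp_add, two_mul]
  constructor
  · refine Matrix.posSemidef_sub_of_dotProduct_mulVec_le (hherm B) (hsmul _ C) fun x ↦ ?_
    have := pow_le_pow_left₀ (norm_nonneg _) (hCB x) 2
    rw [mul_pow, hsq] at this
    simp only [Matrix.smul_mulVec, dotProduct_smul, smul_eq_mul, dotProduct_mul_transpose_mulVec]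
    calc Real.exp (-2 * c) * ‖WithLp.toLp 2 (x ᵥ* C)‖ ^ 2
        ≤ Real.exp (-2 * c) * (Real.exp (2 * c) * ‖WithLp.toLp 2 (x ᵥ* B)‖ ^ 2) := by gcongr
      _ = ‖WithLp.toLp 2 (x ᵥ* B)‖ ^ 2 := by rw [← mul_assoc, ← Real.exp_add]; simp
  · refine Matrix.posSemidef_sub_of_dotProduct_mulVec_le (hsmul _ C) (hherm B) fun x ↦ ?_
    have := pow_le_pow_left₀ (norm_nonneg _) (hBC x) 2
    rw [mul_pow, hsq] at this
    simpa only [Matrix.smul_mulVec, dotProduct_smul, smul_eq_mul, dotProduct_mul_transpose_mulVec]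

end Loewner

theorem stmt14_general (d : ℕ)
    (A : ℝ → Matrix (Fin d) (Fin d) ℝ)
    (hAunit : ∀ t ∈ Set.Icc (0:ℝ) 1, IsUnit (A t))
    (m' : ℝ → (Fin d → ℝ)) (A' : ℝ → Matrix (Fin d) (Fin d) ℝ)
    (hA'int : @IntervalIntegrable _ UniformSpace.toTopologicalSpace NormedAddGroup.toENormedAddMonoid A' volume 0 1)
    (hA : ∀ t ∈ Set.Icc (0:ℝ) 1, A t = A 0 + ∫ s in (0:ℝ)..t, A' s)
    (I : ℝ)
    (hIdef : I = ∫ t in (0:ℝ)..1,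
      (((A t)⁻¹ *ᵥ m' t) ⬝ᵥ ((A t)⁻¹ *ᵥ m' t) + frobeniusNormSq ((A t)⁻¹ * A' t)))
    (hIfin : IntervalIntegrable (fun t =>
      ((A t)⁻¹ *ᵥ m' t) ⬝ᵥ ((A t)⁻¹ *ᵥ m' t) + frobeniusNormSq ((A t)⁻¹ * A' t))
      volume 0 1) :
    ∀ t ∈ Set.Icc (0:ℝ) 1,
      (A t * (A t)ᵀ - Real.exp (-2 * Real.sqrt I) • (A 0 * (A 0)ᵀ)).PosSemidef ∧
      (Real.exp (2 * Real.sqrt I) • (A 0 * (A 0)ᵀ) - A t * (A t)ᵀ).PosSemidef := by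
  have h01 : (0:ℝ) ≤ 1 := zero_le_one
  rw [← uIcc_of_le h01] at hA
  have hAac := hA'int.absolutelyContinuousOnInterval_of_eq_add_integral hA
  have hA' := hA'int.ae_hasDerivAt_of_eq_add_integral hA
  have hFq : ∀ t, frobeniusNormSq ((A t)⁻¹ * A' t) ≤
      ((A t)⁻¹ *ᵥ m' t) ⬝ᵥ ((A t)⁻¹ *ᵥ m' t) + frobeniusNormSq ((A t)⁻¹ * A' t) :=
    fun t ↦ le_add_of_nonneg_left (dotProduct_self_star_nonneg _)
  have hF := intervalIntegrable_frobeniusNormSq_inv_mul h01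
    (uIcc_of_le h01 ▸ hAac.continuousOn) hAunit hA'int.1.aestronglyMeasurable hIfin hFq
  have hk := hF.sqrt h01 fun t ↦ frobeniusNormSq_nonneg _
  have hkI := intervalIntegral_sqrt_le h01 hF (fun t ↦ frobeniusNormSq_nonneg _) hIfin hFq
  rw [sub_zero, one_mul, ← hIdef] at hkI
  intro t ht
  have hsub : uIcc 0 t ⊆ uIcc (0:ℝ) 1 := uIcc_subset_uIcc_left (uIcc_of_le h01 ▸ ht)
  have hlog : ∀ x ≠ 0, |Real.log ‖WithLp.toLp 2 (x ᵥ* A t)‖ -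
      Real.log ‖WithLp.toLp 2 (x ᵥ* A 0)‖| ≤ √I := fun x hx ↦
    (abs_log_norm_vecMul_sub_le_integral ht.1 (fun s hs ↦ hAunit s (uIcc_of_le h01 ▸ hsub hs))
      (hAac.mono hsub) (by filter_upwards [hA'] with s hs hs' using hs (hsub hs'))
      (hk.mono_set hsub) hx).trans
    ((intervalIntegral.integral_mono_interval le_rfl ht.1 ht.2
      (ae_of_all _ fun _ ↦ Real.sqrt_nonneg _) hk).trans hkI)
  exact posSemidef_mul_transpose_sandwich
    (norm_toLp_vecMul_le_exp_mul (hAunit 0 (left_mem_Icc.2 h01)) hlog)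
    (norm_toLp_vecMul_le_exp_mul (hAunit t ht) fun x hx ↦ (abs_sub_comm _ _).trans_le (hlog x hx))

/-- Two-sided covariance bound along finite-action horizontal curves:
`e^{-2√I} A(0)A(0)ᵀ ⪯ A(t)A(t)ᵀ ⪯ e^{2√I} A(0)A(0)ᵀ` for `t ∈ [0,1]`, where `I`
is the action `∫₀¹ (|A⁻¹m'|² + ‖A⁻¹A'‖_HS²) dt`. -/
theorem stmt14 (d : ℕ) (hd : 1 ≤ d)
    (m : ℝ → (Fin d → ℝ)) (A : ℝ → Matrix (Fin d) (Fin d) ℝ)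
    (hAunit : ∀ t ∈ Set.Icc (0:ℝ) 1, IsUnit (A t))
    (m' : ℝ → (Fin d → ℝ)) (A' : ℝ → Matrix (Fin d) (Fin d) ℝ)
    (hm'int : IntervalIntegrable m' volume 0 1)
    (hA'int : @IntervalIntegrable _ UniformSpace.toTopologicalSpace NormedAddGroup.toENormedAddMonoid A' volume 0 1)
    (hm : ∀ t ∈ Set.Icc (0:ℝ) 1, m t = m 0 + ∫ s in (0:ℝ)..t, m' s)
    (hA : ∀ t ∈ Set.Icc (0:ℝ) 1, A t = A 0 + ∫ s in (0:ℝ)..t, A' s)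
    (I : ℝ)
    (hIdef : I = ∫ t in (0:ℝ)..1,
      (((A t)⁻¹ *ᵥ m' t) ⬝ᵥ ((A t)⁻¹ *ᵥ m' t) + frobeniusNormSq ((A t)⁻¹ * A' t)))
    (hIfin : IntervalIntegrable (fun t =>
      ((A t)⁻¹ *ᵥ m' t) ⬝ᵥ ((A t)⁻¹ *ᵥ m' t) + frobeniusNormSq ((A t)⁻¹ * A' t))
      volume 0 1) :
    ∀ t ∈ Set.Icc (0:ℝ) 1,
      (A t * (A t)ᵀ - Real.exp (-2 * Real.sqrt I) • (A 0 * (A 0)ᵀ)).PosSemidef ∧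
      (Real.exp (2 * Real.sqrt I) • (A 0 * (A 0)ᵀ) - A t * (A t)ᵀ).PosSemidef :=
  stmt14_general d A hAunit m' A' hA'int hA I hIdef hIfin
end

section
/- Matrix inverse perturbation bounds: Let d ≥ 1 and let B, D be symmetric d×d real matrices with B positive definite, D positive semidefinite, and ½B − D positive semidefinite. Then B + D is positive definite (in particular invertible) and B⁻¹ − B⁻¹ D B⁻¹ ⪯ (B + D)⁻¹ ⪯ B⁻¹ + 2 B⁻¹ D B⁻¹, where X ⪯ Y means that Y − X is positive semidefinite. -/
/-!
By the resolvent identity `B⁻¹ - (B + D)⁻¹ = B⁻¹ D (B + D)⁻¹ = (B + D)⁻¹ D B⁻¹`, both gaps are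
sums of congruences of positive semidefinite matrices:
`(B + D)⁻¹ - (B⁻¹ - B⁻¹ D B⁻¹) = (D B⁻¹)ᴴ (B + D)⁻¹ (D B⁻¹)` and
`B⁻¹ - (B + D)⁻¹ = (B + D)⁻¹ D (B + D)⁻¹ + (D (B + D)⁻¹)ᴴ B⁻¹ (D (B + D)⁻¹)`.
Hence `(B + D)⁻¹ ⪯ B⁻¹`, which gives the upper bound with room to spare.
-/

open Matrix

namespace Matrix

variable {n K : Type*} [Fintype n] [DecidableEq n] [Field K] {B D : Matrix n n K}

theorem inv_sub_inv_add_eq_inv_mul_mul_inv_add (hB : IsUnit B) (hBD : IsUnit (B + D)) :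
    B⁻¹ - (B + D)⁻¹ = B⁻¹ * D * (B + D)⁻¹ := by
  rw [inv_sub_inv (by simp [hB, hBD]), add_sub_cancel_left]

theorem inv_sub_inv_add_eq_inv_add_mul_mul_inv (hB : IsUnit B) (hBD : IsUnit (B + D)) :
    B⁻¹ - (B + D)⁻¹ = (B + D)⁻¹ * D * B⁻¹ := by
  rw [← neg_sub, inv_sub_inv (by simp [hB, hBD]), sub_add_cancel_left, Matrix.mul_neg,
    Matrix.neg_mul, neg_neg]

theorem inv_sub_inv_add_eq_sum (hB : IsUnit B) (hBD : IsUnit (B + D)) :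
    B⁻¹ - (B + D)⁻¹ = (B + D)⁻¹ * D * (B + D)⁻¹ + (B + D)⁻¹ * D * B⁻¹ * D * (B + D)⁻¹ := by
  calc B⁻¹ - (B + D)⁻¹ = (B + D)⁻¹ * D * ((B + D)⁻¹ + (B⁻¹ - (B + D)⁻¹)) := by
        rw [add_sub_cancel, inv_sub_inv_add_eq_inv_add_mul_mul_inv hB hBD]
    _ = _ := by
        rw [inv_sub_inv_add_eq_inv_mul_mul_inv_add hB hBD]; noncomm_ring

theorem inv_add_sub_eq (hB : IsUnit B) (hBD : IsUnit (B + D)) :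
    (B + D)⁻¹ - (B⁻¹ - B⁻¹ * D * B⁻¹) = B⁻¹ * D * (B + D)⁻¹ * D * B⁻¹ := by
  calc (B + D)⁻¹ - (B⁻¹ - B⁻¹ * D * B⁻¹) = B⁻¹ * D * B⁻¹ - (B⁻¹ - (B + D)⁻¹) := by abel
    _ = B⁻¹ * D * (B⁻¹ - (B + D)⁻¹) := by
        rw [Matrix.mul_sub, ← inv_sub_inv_add_eq_inv_mul_mul_inv_add hB hBD]
    _ = _ := by
        rw [inv_sub_inv_add_eq_inv_add_mul_mul_inv hB hBD]; noncomm_ring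

variable [PartialOrder K] [StarRing K] [AddLeftMono K]

theorem PosDef.posSemidef_inv_sub_inv_add (hB : B.PosDef) (hD : D.PosSemidef) :
    (B⁻¹ - (B + D)⁻¹).PosSemidef := by
  have hBD := hB.add_posSemidef hD
  have hBDinv := hBD.inv.isHermitian.eq
  rw [inv_sub_inv_add_eq_sum hB.isUnit hBD.isUnit]
  refine (hBDinv ▸ hD.conjTranspose_mul_mul_same (B + D)⁻¹).add ?_
  simpa [conjTranspose_mul, hBDinv, hD.isHermitian.eq, Matrix.mul_assoc] using
    hB.inv.posSemidef.conjTranspose_mul_mul_same (D * (B + D)⁻¹)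

theorem PosDef.posSemidef_inv_add_sub_inv_sub_inv_mul_mul_inv (hB : B.PosDef)
    (hD : D.PosSemidef) : ((B + D)⁻¹ - (B⁻¹ - B⁻¹ * D * B⁻¹)).PosSemidef := by
  have hBD := hB.add_posSemidef hD
  rw [inv_add_sub_eq hB.isUnit hBD.isUnit]
  simpa [conjTranspose_mul, hB.inv.isHermitian.eq, hD.isHermitian.eq, Matrix.mul_assoc] using
    hBD.inv.posSemidef.conjTranspose_mul_mul_same (D * B⁻¹)

end Matrix

theorem stmt17_general (d : ℕ)
    (B D : Matrix (Fin d) (Fin d) ℝ)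
    (hB : B.PosDef) (hD : D.PosSemidef) :
    (B + D).PosDef ∧ IsUnit (B + D) ∧
    ((B + D)⁻¹ - (B⁻¹ - B⁻¹ * D * B⁻¹)).PosSemidef ∧
    ((B⁻¹ + 2 * (B⁻¹ * D * B⁻¹)) - (B + D)⁻¹).PosSemidef := by
  have hBD : (B + D).PosDef := hB.add_posSemidef hD
  have hBDB : (B⁻¹ * D * B⁻¹).PosSemidef := by
    simpa only [hB.inv.isHermitian.eq] using hD.conjTranspose_mul_mul_same B⁻¹
  refine ⟨hBD, hBD.isUnit, hB.posSemidef_inv_add_sub_inv_sub_inv_mul_mul_inv hD, ?_⟩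
  have hsplit : B⁻¹ + 2 * (B⁻¹ * D * B⁻¹) - (B + D)⁻¹
      = (B⁻¹ - (B + D)⁻¹) + (B⁻¹ * D * B⁻¹ + B⁻¹ * D * B⁻¹) := by
    rw [two_mul]; abel
  rw [hsplit]
  exact (hB.posSemidef_inv_sub_inv_add hD).add (hBDB.add hBDB)

/-- Matrix inverse perturbation bounds: if `B ≻ 0`, `D ⪰ 0` and `D ⪯ ½B`, then `B + D`
is positive definite (in particular invertible) and
`B⁻¹ - B⁻¹DB⁻¹ ⪯ (B + D)⁻¹ ⪯ B⁻¹ + 2B⁻¹DB⁻¹`. -/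
theorem stmt17 (d : ℕ) (hd : 1 ≤ d)
    (B D : Matrix (Fin d) (Fin d) ℝ)
    (hB : B.PosDef) (hD : D.PosSemidef)
    (hhalf : (((1 : ℝ) / 2) • B - D).PosSemidef) :
    (B + D).PosDef ∧ IsUnit (B + D) ∧
    ((B + D)⁻¹ - (B⁻¹ - B⁻¹ * D * B⁻¹)).PosSemidef ∧
    ((B⁻¹ + 2 * (B⁻¹ * D * B⁻¹)) - (B + D)⁻¹).PosSemidef :=
  stmt17_general d B D hB hD
end

section
/- Monotone decay of the relaxation profile: For every a > 0, the function f(t) := e^{2t} ( √(1 − e^{−2t} + a e^{−2t}) − 1 )² is nonnegative and non-increasing on [0,∞); in particular f(t) ≤ f(0) = (√a − 1)² for all t ≥ 0. -/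
/-!
Multiplying the square root by `e^t` gives `f t = (√(e^{2t} + c) - e^t)²` with `c = a - 1`.
Since `(√(s² + c) - s)(√(s² + c) + s) = c`, the quantity `|√(s² + c) - s|` is `|c|` divided by
a function increasing in `s`, so `f` decreases.
-/

open Real

lemma sq_sqrt_sq_add_sub_le_of_le {c s r : ℝ} (hs : 0 ≤ s) (hc : 0 ≤ s ^ 2 + c) (hsr : s ≤ r) :
    (√(r ^ 2 + c) - r) ^ 2 ≤ (√(s ^ 2 + c) - s) ^ 2 := by
  have hrc : 0 ≤ r ^ 2 + c := by nlinarith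
  have hX := sq_sqrt hc
  have hY := sq_sqrt hrc
  have hXY : √(s ^ 2 + c) ≤ √(r ^ 2 + c) := sqrt_le_sqrt (by nlinarith)
  have hX0 := sqrt_nonneg (s ^ 2 + c)
  set X := √(s ^ 2 + c)
  set Y := √(r ^ 2 + c)
  have hprod : (Y - r) ^ 2 * (Y + r) ^ 2 = (X - s) ^ 2 * (X + s) ^ 2 := by
    linear_combination (Y ^ 2 - r ^ 2 + X ^ 2 - s ^ 2) * (hY - hX)
  rcases (add_nonneg hX0 hs).eq_or_lt with hzero | hpos
  · -- `X + s = 0` forces `s = c = 0`, hence `Y = r`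
    have hc0 : c = 0 := by nlinarith
    have hYr : Y = r := by simp only [Y, hc0, add_zero, sqrt_sq (hs.trans hsr)]
    rw [hYr, sub_self, zero_pow two_ne_zero]
    positivity
  · refine le_of_mul_le_mul_right ?_ (pow_pos hpos 2)
    calc (Y - r) ^ 2 * (X + s) ^ 2 ≤ (Y - r) ^ 2 * (Y + r) ^ 2 := by gcongr
      _ = (X - s) ^ 2 * (X + s) ^ 2 := hprod

lemma exp_two_mul_mul_sqrt_sub_one_sq (a t : ℝ) :
    exp (2 * t) * (√(1 - exp (-2 * t) + a * exp (-2 * t)) - 1) ^ 2 =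
      (√(exp t ^ 2 + (a - 1)) - exp t) ^ 2 := by
  have hexp : exp (2 * t) = exp t ^ 2 := by rw [← exp_nat_mul]; norm_num
  have hinv : exp t ^ 2 * exp (-2 * t) = 1 := by rw [← hexp, ← exp_add]; norm_num
  have hsqrt : √(exp t ^ 2 + (a - 1)) = exp t * √(1 - exp (-2 * t) + a * exp (-2 * t)) := by
    rw [← sqrt_sq (exp_pos t).le, ← sqrt_mul (by positivity), sqrt_sq (exp_pos t).le]
    congr 1
    linear_combination (1 - a) * hinv
  rw [hsqrt, hexp]
  ring

/-- Monotone decay of the relaxation profile: for `a > 0`, the function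
`f(t) = e^{2t} (√(1 - e^{-2t} + a e^{-2t}) - 1)²` is nonnegative and non-increasing on
`[0, ∞)`; in particular `f t ≤ f 0 = (√a - 1)²` for `t ≥ 0`. -/
theorem stmt18 (a : ℝ) (ha : 0 < a)
    (f : ℝ → ℝ)
    (hf : ∀ t, f t = Real.exp (2 * t) *
      (Real.sqrt (1 - Real.exp (-2 * t) + a * Real.exp (-2 * t)) - 1) ^ 2) :
    (∀ t ∈ Set.Ici (0:ℝ), 0 ≤ f t) ∧
    AntitoneOn f (Set.Ici (0:ℝ)) ∧
    f 0 = (Real.sqrt a - 1) ^ 2 ∧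
    (∀ t ∈ Set.Ici (0:ℝ), f t ≤ (Real.sqrt a - 1) ^ 2) := by
  simp only [exp_two_mul_mul_sqrt_sub_one_sq] at hf
  have hanti : AntitoneOn f (Set.Ici 0) := by
    intro t₁ (ht₁ : 0 ≤ t₁) t₂ _ h
    rw [hf, hf]
    have : 1 ≤ exp t₁ ^ 2 := one_le_pow₀ (one_le_exp ht₁)
    exact sq_sqrt_sq_add_sub_le_of_le (exp_pos t₁).le (by linarith) (exp_le_exp.2 h)
  have h0 : f 0 = (√a - 1) ^ 2 := by simp [hf]
  refine ⟨fun t _ => by rw [hf]; positivity, hanti, h0, fun t ht => ?_⟩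
  exact h0 ▸ hanti Set.self_mem_Ici ht ht
end

section
/- Secant bound for the entropy profile along the eigenvalue flow: For every s > 0 define σ(t) := 1 / (1 − e^{−2t} + e^{−2t}/s) for t ≥ 0. Then for every t ≥ 0: σ(t) − 1 − log σ(t) ≤ max{1, 1/s} · e^{−2t} · ( s − 1 − log s ). -/
/-!
Write `φ u = u - 1 - log u`, `r = e^{-2t} ∈ (0, 1]` and `d = 1 - r + r/s`, so that `σ(t) = 1/d`.
If `s ≥ 1`, then `1 ≤ 1/d ≤ 1 - r + r s` (harmonic–arithmetic mean), and `φ`, being increasing on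
`[1, ∞)` and convex with `φ 1 = 0`, gives `φ (1/d) ≤ φ (1 - r + r s) ≤ r φ s`.
If `s ≤ 1`, then `d ≥ 1`, and `φ (1/d) ≤ φ d ≤ r φ (1/s) ≤ (r/s) φ s`: the first step is
`log d ≤ sinh (log d)`, the second convexity, the last the Padé bound `log y ≥ 2 (y - 1)/(y + 1)`.
-/

open Real Set

noncomputable def entropyIntegrand (u : ℝ) : ℝ := u - 1 - log u

@[simp]
lemma entropyIntegrand_one : entropyIntegrand 1 = 0 := by
  simp [entropyIntegrand]

lemma convexOn_entropyIntegrand : ConvexOn ℝ (Ioi 0) entropyIntegrand :=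
  ((convexOn_id (convex_Ioi 0)).sub (concaveOn_const 1 (convex_Ioi 0))).sub
    strictConcaveOn_log_Ioi.concaveOn

lemma monotoneOn_entropyIntegrand : MonotoneOn entropyIntegrand (Ici 1) := by
  intro x (hx : 1 ≤ x) y _ hxy
  have hx0 : 0 < x := by linarith
  have hy0 : 0 < y := by linarith
  have hlog : log (y / x) ≤ y / x - 1 := log_le_sub_one_of_pos (by positivity)
  rw [log_div (by positivity) hx0.ne'] at hlog
  have hquot : y / x ≤ y - x + 1 := by
    rw [div_le_iff₀ hx0]
    nlinarith
  simp only [entropyIntegrand]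
  linarith

lemma entropyIntegrand_one_sub_add_mul_le {s r : ℝ} (hs : 0 < s) (hr0 : 0 ≤ r) (hr1 : r ≤ 1) :
    entropyIntegrand (1 - r + r * s) ≤ r * entropyIntegrand s := by
  have h := convexOn_entropyIntegrand.2 (mem_Ioi.2 one_pos) (mem_Ioi.2 hs)
    (sub_nonneg.2 hr1) hr0 (sub_add_cancel 1 r)
  simpa using h

lemma inv_one_sub_add_mul_inv_le {s r : ℝ} (hs : 0 < s) (hr0 : 0 ≤ r) (hr1 : r ≤ 1) :
    (1 - r + r * s⁻¹)⁻¹ ≤ 1 - r + r * s := by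
  have h := (convexOn_zpow (-1 : ℤ)).2 (mem_Ioi.2 one_pos) (mem_Ioi.2 (inv_pos.2 hs))
    (sub_nonneg.2 hr1) hr0 (sub_add_cancel 1 r)
  simpa using h

lemma entropyIntegrand_inv_le {d : ℝ} (hd : 1 ≤ d) :
    entropyIntegrand d⁻¹ ≤ entropyIntegrand d := by
  have hd0 : 0 < d := by linarith
  have hsinh : log d ≤ sinh (log d) := self_le_sinh_iff.2 (log_nonneg hd)
  rw [sinh_log hd0] at hsinh
  simp only [entropyIntegrand, log_inv]
  linarith

lemma two_mul_sub_one_le_add_one_mul_log {y : ℝ} (hy : 1 ≤ y) :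
    2 * (y - 1) ≤ (y + 1) * log y := by
  have hy1 : 0 < y + 1 := by linarith
  have h := sum_range_le_log_div (x := (y - 1) / (y + 1)) (div_nonneg (by linarith) hy1.le)
    (by rw [div_lt_one hy1]; linarith) 1
  have hratio : (1 + (y - 1) / (y + 1)) / (1 - (y - 1) / (y + 1)) = y := by
    field_simp
    ring
  rw [hratio, Finset.sum_range_one] at h
  norm_num [div_le_iff₀ hy1] at h
  linarith

lemma entropyIntegrand_le_mul_entropyIntegrand_inv {y : ℝ} (hy : 1 ≤ y) :
    entropyIntegrand y ≤ y * entropyIntegrand y⁻¹ := by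
  have hpade := two_mul_sub_one_le_add_one_mul_log hy
  have hy0 : y ≠ 0 := by positivity
  simp only [entropyIntegrand, log_inv, mul_sub, mul_inv_cancel₀ hy0]
  linarith

lemma entropyIntegrand_inv_le_max_mul {s r : ℝ} (hs : 0 < s) (hr0 : 0 ≤ r) (hr1 : r ≤ 1) :
    entropyIntegrand (1 - r + r * s⁻¹)⁻¹ ≤ max 1 s⁻¹ * r * entropyIntegrand s := by
  rcases le_total 1 s with h1s | hs1
  · have hsinv : s⁻¹ ≤ 1 := inv_le_one_of_one_le₀ h1s
    have hd0 : 0 < 1 - r + r * s⁻¹ := by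
      nlinarith [inv_pos.2 hs, mul_le_mul_of_nonneg_left hsinv (sub_nonneg.2 hr1)]
    have hd1 : 1 - r + r * s⁻¹ ≤ 1 := by nlinarith
    have hσ1 : 1 ≤ (1 - r + r * s⁻¹)⁻¹ := one_le_inv₀ hd0 |>.2 hd1
    have hharm := inv_one_sub_add_mul_inv_le hs hr0 hr1
    rw [max_eq_left hsinv, one_mul]
    calc entropyIntegrand (1 - r + r * s⁻¹)⁻¹ ≤ entropyIntegrand (1 - r + r * s) :=
          monotoneOn_entropyIntegrand hσ1 (hσ1.trans hharm) hharm
      _ ≤ r * entropyIntegrand s := entropyIntegrand_one_sub_add_mul_le hs hr0 hr1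
  · have hsinv : 1 ≤ s⁻¹ := one_le_inv₀ hs |>.2 hs1
    have hd1 : 1 ≤ 1 - r + r * s⁻¹ := by nlinarith
    rw [max_eq_right hsinv]
    calc entropyIntegrand (1 - r + r * s⁻¹)⁻¹ ≤ entropyIntegrand (1 - r + r * s⁻¹) :=
          entropyIntegrand_inv_le hd1
      _ ≤ r * entropyIntegrand s⁻¹ := entropyIntegrand_one_sub_add_mul_le (by positivity) hr0 hr1
      _ ≤ r * (s⁻¹ * entropyIntegrand s) := by
          gcongr
          simpa using entropyIntegrand_le_mul_entropyIntegrand_inv hsinv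
      _ = s⁻¹ * r * entropyIntegrand s := by ring

/-- Secant bound for the entropy profile along the eigenvalue flow:
with `σ(t) = 1 / (1 - e^{-2t} + e^{-2t}/s)`, one has
`σ(t) - 1 - log σ(t) ≤ max{1, 1/s} · e^{-2t} · (s - 1 - log s)` for all `t ≥ 0`. -/
theorem stmt19 (s : ℝ) (hs : 0 < s)
    (σ : ℝ → ℝ)
    (hσ : ∀ t, σ t = 1 / (1 - Real.exp (-2 * t) + Real.exp (-2 * t) / s)) :
    ∀ t, 0 ≤ t →
      σ t - 1 - Real.log (σ t) ≤ max 1 (1 / s) * Real.exp (-2 * t) * (s - 1 - Real.log s) := by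
  intro t ht
  have hr1 : exp (-2 * t) ≤ 1 := exp_le_one_iff.2 (by linarith)
  have key := entropyIntegrand_inv_le_max_mul hs (exp_pos (-2 * t)).le hr1
  simpa only [hσ t, entropyIntegrand, div_eq_mul_inv, one_mul] using key
end
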